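/- arXiv:2208.14229 — 4 statements merged into one kernel-verified Lean document; each statement's English description precedes it below -/
import Mathlib

section
/- A connected graph is distance-2 3-colorable (i.e., there is a coloring of its vertices with 3 colors such that any two distinct vertices at distance at most 2 receive different colors) if and only if it is a path or a cycle whose length is divisible by 3. -/
open SimpleGraph Finset

set_option linter.unusedSectionVars false
set_option maxHeartbeats 1000000


section aux
variable {V : Type} [Fintype V] [DecidableEq V] (G : SimpleGraph V) [DecidableRel G.Adj]

noncomputable def nxt (z y : V) : V :=
  if h : (G.neighborFinset y \ {z}).Nonempty then h.choose else y

lemma nxt_mem {z y : V} (h : (G.neighborFinset y \ {z}).Nonempty) :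
    nxt G z y ∈ G.neighborFinset y \ {z} := by
  rw [nxt, dif_pos h]; exact h.choose_spec

lemma sdiff_nonempty_of_deg2 {z y : V} (h : G.degree y = 2) :
    (G.neighborFinset y \ {z}).Nonempty := by
  rw [← Finset.card_pos]
  have := Finset.le_card_sdiff ({z} : Finset V) (G.neighborFinset y)
  simp only [Finset.card_singleton] at this
  have h' : (G.neighborFinset y).card = 2 := h
  omega

lemma nxt_adj {z y : V} (h : (G.neighborFinset y \ {z}).Nonempty) : G.Adj y (nxt G z y) := by
  have := nxt_mem G h; rw [Finset.mem_sdiff, mem_neighborFinset] at this; exact this.1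

lemma nxt_ne {z y : V} (h : (G.neighborFinset y \ {z}).Nonempty) : nxt G z y ≠ z := by
  have := nxt_mem G h; rw [Finset.mem_sdiff, Finset.mem_singleton] at this; exact this.2

lemma neighborFinset_eq_pair {z y : V} (hdeg : G.degree y ≤ 2) (hz : G.Adj y z)
    (h : (G.neighborFinset y \ {z}).Nonempty) :
    G.neighborFinset y = {z, nxt G z y} := by
  have h1 : ({z, nxt G z y} : Finset V) ⊆ G.neighborFinset y := by
    intro u hu
    rcases Finset.mem_insert.mp hu with rfl | hu
    · rwa [mem_neighborFinset]
    · rw [Finset.mem_singleton] at hu; subst hu; exact Finset.mem_sdiff.mp (nxt_mem G h) |>.1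
  have h2 : ({z, nxt G z y} : Finset V).card = 2 := by
    rw [Finset.card_insert_of_notMem, Finset.card_singleton]
    simp [Ne.symm (nxt_ne G h)]
  exact (Finset.eq_of_subset_of_card_le h1 (by rw [h2]; exact hdeg)).symm

lemma closure_eq_univ (hconn : G.Connected) (s : Set V) (x : V) (hx : x ∈ s)
    (hcl : ∀ u ∈ s, ∀ v, G.Adj u v → v ∈ s) : ∀ v, v ∈ s := by
  intro v
  obtain ⟨w⟩ := hconn x v
  induction w with
  | nil => exact hx
  | cons h p ih => exact ih (hcl _ hx _ h)

noncomputable def seq (x a : V) : ℕ → V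
  | 0 => x
  | 1 => a
  | (k+2) => nxt G (seq x a k) (seq x a (k+1))

lemma seq_zero (x a : V) : seq G x a 0 = x := rfl
lemma seq_one (x a : V) : seq G x a 1 = a := rfl
lemma seq_add_two (x a : V) (k : ℕ) :
    seq G x a (k+2) = nxt G (seq G x a k) (seq G x a (k+1)) := rfl

/-- the minimal repeat of the greedy sequence can only close up at index 0 -/
lemma min_repeat_zero {G : SimpleGraph V} [DecidableRel G.Adj] {f : ℕ → V} {B c j : ℕ}
    (hadj : ∀ k, k < B → G.Adj (f k) (f (k+1)))
    (hnef : ∀ k, k + 2 ≤ B → f (k+2) ≠ f k)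
    (hpair : ∀ k, k + 2 ≤ B → G.neighborFinset (f (k+1)) = {f k, f (k+2)})
    (hc : c ≤ B) (hj : j < c) (hfe : f j = f c)
    (hmin : ∀ i i', i < i' → i' < c → f i ≠ f i') : j = 0 := by
  by_contra h0
  obtain ⟨j', rfl⟩ : ∃ j', j = j'+1 := ⟨j-1, by omega⟩
  obtain ⟨c', rfl⟩ : ∃ c', c = c'+1 := ⟨c-1, by omega⟩
  have hadjc : G.Adj (f c') (f (c'+1)) := hadj c' (by omega)
  by_cases hlast : j'+1 = c'
  · exact hadjc.ne (by rw [hlast] at hfe; exact hfe.trans rfl |>.symm ▸ hfe) |>.elim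
  have hj2 : j'+1 < c' := by omega
  have hmem : f c' ∈ G.neighborFinset (f (j'+1)) := by
    rw [hfe, mem_neighborFinset]
    exact hadjc.symm
  rw [hpair j' (by omega)] at hmem
  rcases Finset.mem_insert.mp hmem with h | h
  · exact hmin j' c' (by omega) (by omega) h.symm
  · rw [Finset.mem_singleton] at h
    by_cases h2 : j'+2 = c'
    · have : c'+1 = (j'+1)+2 := by omega
      rw [this] at hfe
      exact hnef (j'+1) (by omega) hfe.symm
    · exact hmin (j'+2) c' (by omega) (by omega) h.symm

end aux

section finadj
variable {m : ℕ}
open Fin.CommRing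

lemma adj_eqF {u v : Fin (m+3)} (h : (cycleGraph (m+3)).Adj u v) : u = v + 1 ∨ v = u + 1 := by
  rw [cycleGraph_adj] at h
  rcases h with h | h
  · left; rw [sub_eq_iff_eq_add] at h; rw [h]; ring
  · right; rw [sub_eq_iff_eq_add] at h; rw [h]; ring

lemma adj_of_eqF {u v : Fin (m+3)} (h : u = v + 1) : (cycleGraph (m+3)).Adj u v := by
  rw [cycleGraph_adj]
  exact Or.inl (by rw [h]; ring)

lemma val_add_oneF (v : Fin (m+3)) : (v + 1).val = (v.val + 1) % (m+3) := by
  rw [Fin.val_add, Fin.val_one]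

lemma cycleGraph_adj_iff_val {i j : Fin (m+3)} :
    (cycleGraph (m+3)).Adj i j ↔
      (j.val = (i.val + 1) % (m+3) ∨ i.val = (j.val + 1) % (m+3)) := by
  constructor
  · intro h
    rcases adj_eqF h with h | h
    · exact Or.inr (by rw [h, val_add_oneF])
    · exact Or.inl (by rw [h, val_add_oneF])
  · rintro (h | h)
    · exact (adj_of_eqF (Fin.ext (by rw [val_add_oneF]; exact h))).symm
    · exact adj_of_eqF (Fin.ext (by rw [val_add_oneF]; exact h))

end finadj

section classify
variable {V : Type} [Fintype V] [DecidableEq V] {G : SimpleGraph V} [DecidableRel G.Adj]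

lemma path_case (hG : G.Connected) (hdeg : ∀ v, G.degree v ≤ 2) (x : V) (hx : G.degree x ≤ 1) :
    ∃ n, Nonempty (G ≃g pathGraph n) := by
  classical
  by_cases h0 : G.degree x = 0
  · -- G is a single vertex
    have hNx : G.neighborFinset x = ∅ := Finset.card_eq_zero.mp h0
    have hall : ∀ v, v = x := by
      refine closure_eq_univ G hG {v | v = x} x rfl ?_
      rintro u rfl v hadj
      have : v ∈ G.neighborFinset u := by rwa [mem_neighborFinset]
      rw [hNx] at this
      exact absurd this (Finset.notMem_empty v)
    refine ⟨1, ⟨SimpleGraph.Iso.symm ⟨Equiv.ofBijective (fun _ : Fin 1 => x) ⟨?_, ?_⟩, ?_⟩⟩⟩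
    · intro i j _; exact Subsingleton.elim i j
    · intro v; exact ⟨0, (hall v).symm⟩
    · intro i j
      refine iff_of_false (G.irrefl) ?_
      rw [Subsingleton.elim i j]
      exact (pathGraph 1).irrefl
  · have h1 : G.degree x = 1 := by omega
    obtain ⟨a, hNx⟩ := Finset.card_eq_one.mp h1
    set f : ℕ → V := seq G x a with hfdef
    have hf1 : f 1 = a := rfl
    have hadj0 : G.Adj x a := by
      rw [← mem_neighborFinset, hNx]
      exact Finset.mem_singleton_self a
    -- the sequence must die
    have hD : ∃ k, ¬(G.neighborFinset (f (k+1)) \ {f k}).Nonempty := by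
      by_contra hnd
      push_neg at hnd
      have hadjf : ∀ k, G.Adj (f k) (f (k+1)) := by
        intro k
        match k with
        | 0 => exact hadj0
        | (k+1) =>
            rw [hfdef, seq_add_two]
            exact nxt_adj G (hnd k)
      have hnef : ∀ k, f (k+2) ≠ f k := by
        intro k
        rw [hfdef, seq_add_two]
        exact nxt_ne G (hnd k)
      have hpairf : ∀ k, G.neighborFinset (f (k+1)) = {f k, f (k+2)} := by
        intro k
        rw [hfdef, seq_add_two]
        exact neighborFinset_eq_pair G (hdeg _) (hadjf k).symm (hnd k)
      have hrep : ∃ k, ∃ j, j < k ∧ f j = f k := by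
        obtain ⟨i, hi, i', hi', hne, hfe⟩ :=
          Finset.exists_ne_map_eq_of_card_lt_of_maps_to
            (s := Finset.range (Fintype.card V + 1))
            (t := Finset.univ) (by simp) (fun i _ => Finset.mem_univ (f i))
        rcases lt_or_gt_of_ne hne with h | h
        · exact ⟨i', ⟨i, h, hfe⟩⟩
        · exact ⟨i, ⟨i', h, hfe.symm⟩⟩
      obtain ⟨c, ⟨j, hj, hfe⟩, hminc⟩ :
          ∃ c, (∃ j, j < c ∧ f j = f c) ∧ ∀ k, k < c → ¬∃ j, j < k ∧ f j = f k :=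
        ⟨Nat.find hrep, Nat.find_spec hrep, fun k hk => Nat.find_min hrep hk⟩
      have hmin : ∀ i i', i < i' → i' < c → f i ≠ f i' := by
        intro i i' ha hb he
        exact hminc i' hb ⟨i, ha, he⟩
      have hj0 : j = 0 := min_repeat_zero (B := c) (fun k _ => hadjf k) (fun k _ => hnef k)
        (fun k _ => hpairf k) le_rfl hj hfe hmin
      subst hj0
      have hc1 : c ≠ 1 := by
        intro h; rw [h] at hfe; exact (hadjf 0).ne hfe
      have hc2 : c ≠ 2 := by
        intro h; rw [h] at hfe; exact hnef 0 hfe.symm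
      obtain ⟨c', rfl⟩ : ∃ c', c = c'+1 := ⟨c-1, by omega⟩
      have hmem : f c' ∈ G.neighborFinset x := by
        rw [mem_neighborFinset]
        have := (hadjf c').symm
        rwa [← hfe] at this
      rw [hNx, Finset.mem_singleton] at hmem
      exact hmin 1 c' (by omega) (by omega) (by rw [hf1, hmem])
    obtain ⟨L, hdead, halive⟩ :
        ∃ L, ¬(G.neighborFinset (f (L+1)) \ {f L}).Nonempty ∧
          ∀ k, k < L → (G.neighborFinset (f (k+1)) \ {f k}).Nonempty :=
      ⟨Nat.find hD, Nat.find_spec hD, fun k hk => not_not.mp (Nat.find_min hD hk)⟩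
    have hadjf : ∀ k, k ≤ L → G.Adj (f k) (f (k+1)) := by
      intro k hk
      match k with
      | 0 => exact hadj0
      | (k+1) =>
          rw [hfdef, seq_add_two]
          exact nxt_adj G (halive k (by omega))
    have hnef : ∀ k, k < L → f (k+2) ≠ f k := by
      intro k hk
      rw [hfdef, seq_add_two]
      exact nxt_ne G (halive k hk)
    have hpairf : ∀ k, k < L → G.neighborFinset (f (k+1)) = {f k, f (k+2)} := by
      intro k hk
      rw [hfdef, seq_add_two]
      exact neighborFinset_eq_pair G (hdeg _) (hadjf k (by omega)).symm (halive k hk)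
    have hdead' : G.neighborFinset (f (L+1)) = {f L} := by
      refine Finset.Subset.antisymm ?_ ?_
      · rw [← Finset.sdiff_eq_empty_iff_subset]
        exact Finset.not_nonempty_iff_eq_empty.mp hdead
      · rw [Finset.singleton_subset_iff, mem_neighborFinset]
        exact (hadjf L le_rfl).symm
    -- no repeats up to L+1
    have hmin : ∀ i i', i < i' → i' ≤ L+1 → f i ≠ f i' := by
      by_contra hc
      push_neg at hc
      obtain ⟨i, i', hlt, hle, he⟩ := hc
      have hrep : ∃ k, ∃ j, j < k ∧ f j = f k := ⟨i', i, hlt, he⟩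
      obtain ⟨c, ⟨j, hj, hfe⟩, hcle, hminc⟩ :
          ∃ c, (∃ j, j < c ∧ f j = f c) ∧ c ≤ i' ∧ ∀ k, k < c → ¬∃ j, j < k ∧ f j = f k :=
        ⟨Nat.find hrep, Nat.find_spec hrep, Nat.find_min' hrep ⟨i, hlt, he⟩,
          fun k hk => Nat.find_min hrep hk⟩
      have hcL : c ≤ L+1 := le_trans hcle hle
      have hmin' : ∀ p q, p < q → q < c → f p ≠ f q := by
        intro p q ha hb he'
        exact hminc q hb ⟨p, ha, he'⟩
      have hj0 : j = 0 := min_repeat_zero (B := L+1) (fun k hk => hadjf k (by omega))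
        (fun k hk => hnef k (by omega)) (fun k hk => hpairf k (by omega)) hcL hj hfe hmin'
      subst hj0
      have hc1 : c ≠ 1 := by
        intro h; rw [h] at hfe; exact (hadjf 0 (by omega)).ne hfe
      have hc2 : c ≠ 2 := by
        intro h
        rw [h] at hfe
        exact hnef 0 (by omega) hfe.symm
      obtain ⟨c'', rfl⟩ : ∃ c'', c = c''+1 := ⟨c-1, by omega⟩
      have hmem : f c'' ∈ G.neighborFinset x := by
        rw [mem_neighborFinset]
        have := (hadjf c'' (by omega)).symm
        rwa [← hfe] at this
      rw [hNx, Finset.mem_singleton] at hmem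
      exact hmin' 1 c'' (by omega) (by omega) (by rw [hf1, hmem])
    have huniq : ∀ i j, i ≤ L+1 → j ≤ L+1 → f i = f j → i = j := by
      intro i j hi hj' he
      rcases lt_trichotomy i j with h | h | h
      · exact absurd he (hmin i j h hj')
      · exact h
      · exact absurd he.symm (hmin j i h hi)
    have hsurj : ∀ v, ∃ i, i ≤ L+1 ∧ f i = v := by
      refine closure_eq_univ G hG {v | ∃ i, i ≤ L+1 ∧ f i = v} x ⟨0, by omega, rfl⟩ ?_
      rintro u ⟨i, hi, rfl⟩ v hadj
      match i, hi with
      | 0, _ =>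
          have hmem : v ∈ G.neighborFinset x := by rwa [mem_neighborFinset]
          rw [hNx, Finset.mem_singleton] at hmem
          exact ⟨1, by omega, by rw [hf1, hmem]⟩
      | (i'+1), hi =>
          by_cases hiL : i' < L
          · have hmem : v ∈ G.neighborFinset (f (i'+1)) := by rwa [mem_neighborFinset]
            rw [hpairf i' hiL] at hmem
            rcases Finset.mem_insert.mp hmem with h | h
            · exact ⟨i', by omega, h.symm⟩
            · exact ⟨i'+2, by omega, (Finset.mem_singleton.mp h).symm⟩
          · have hiL' : i' = L := by omega
            subst hiL'
            have hmem : v ∈ G.neighborFinset (f (i'+1)) := by rwa [mem_neighborFinset]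
            rw [hdead', Finset.mem_singleton] at hmem
            exact ⟨i', by omega, hmem.symm⟩
    refine ⟨L+2, ⟨SimpleGraph.Iso.symm
      ⟨Equiv.ofBijective (fun i : Fin (L+2) => f i.val) ⟨?_, ?_⟩, ?_⟩⟩⟩
    · intro i j h
      exact Fin.ext (huniq i.val j.val (by omega) (by omega) h)
    · intro v
      obtain ⟨i, hi, he⟩ := hsurj v
      exact ⟨⟨i, by omega⟩, he⟩
    · intro i j
      show G.Adj (f i.val) (f j.val) ↔ (pathGraph (L+2)).Adj i j
      rw [pathGraph_adj]
      constructor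
      · intro h
        have hj' : (j : ℕ) ≤ L+1 := by omega
        match (i : ℕ), (by omega : (i : ℕ) ≤ L+1), h with
        | 0, _, h =>
            have hmem : f (j : ℕ) ∈ G.neighborFinset x := by rwa [mem_neighborFinset] at *
            rw [hNx, Finset.mem_singleton] at hmem
            left
            have : (j : ℕ) = 1 := huniq _ 1 hj' (by omega) (by rw [hmem, hf1])
            omega
        | (i'+1), hi', h =>
            by_cases hiL : i' < L
            · have hmem : f (j : ℕ) ∈ G.neighborFinset (f (i'+1)) := by
                rwa [mem_neighborFinset] at *
              rw [hpairf i' hiL] at hmem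
              rcases Finset.mem_insert.mp hmem with hh | hh
              · right
                have : (j : ℕ) = i' := huniq _ i' hj' (by omega) hh
                omega
              · left
                rw [Finset.mem_singleton] at hh
                have : (j : ℕ) = i'+2 := huniq _ (i'+2) hj' (by omega) hh
                omega
            · have hiL' : i' = L := by omega
              subst hiL'
              have hmem : f (j : ℕ) ∈ G.neighborFinset (f (i'+1)) := by
                rwa [mem_neighborFinset] at *
              rw [hdead', Finset.mem_singleton] at hmem
              right
              have : (j : ℕ) = i' := huniq _ i' hj' (by omega) hmem
              omega
      · rintro (h | h)
        · have := hadjf (i : ℕ) (by omega)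
          rwa [show (i : ℕ) + 1 = (j : ℕ) from h] at this
        · have := hadjf (j : ℕ) (by omega)
          rw [show (j : ℕ) + 1 = (i : ℕ) from h] at this
          exact this.symm

lemma cycle_case (hG : G.Connected) (hdeg : ∀ v, G.degree v = 2) :
    ∃ n, 3 ≤ n ∧ Nonempty (G ≃g cycleGraph n) := by
  classical
  have ⟨v0⟩ : Nonempty V := hG.nonempty
  obtain ⟨a, b, hab, hN0⟩ := Finset.card_eq_two.mp (hdeg v0)
  set f : ℕ → V := seq G v0 a with hf
  have hadjf : ∀ k, G.Adj (f k) (f (k+1)) := by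
    intro k
    match k with
    | 0 =>
        show G.Adj v0 a
        rw [← mem_neighborFinset, hN0]
        exact Finset.mem_insert_self a {b}
    | (k+1) =>
        rw [hf, seq_add_two]
        exact nxt_adj G (sdiff_nonempty_of_deg2 G (hdeg _))
  have hnef : ∀ k, f (k+2) ≠ f k := by
    intro k
    rw [hf, seq_add_two]
    exact nxt_ne G (sdiff_nonempty_of_deg2 G (hdeg _))
  have hpairf : ∀ k, G.neighborFinset (f (k+1)) = {f k, f (k+2)} := by
    intro k
    rw [hf, seq_add_two]
    exact neighborFinset_eq_pair G (le_of_eq (hdeg _)) (hadjf k).symm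
      (sdiff_nonempty_of_deg2 G (hdeg _))
  -- there exists a repeat
  have hrep : ∃ k, ∃ j, j < k ∧ f j = f k := by
    set n := Fintype.card V with hn
    obtain ⟨i, hi, i', hi', hne, hfe⟩ :=
      Finset.exists_ne_map_eq_of_card_lt_of_maps_to (s := Finset.range (n+1))
        (t := Finset.univ) (by simp [hn]) (fun i _ => Finset.mem_univ (f i))
    rcases lt_or_gt_of_ne hne with h | h
    · exact ⟨i', ⟨i, h, hfe⟩⟩
    · exact ⟨i, ⟨i', h, hfe.symm⟩⟩
  obtain ⟨c, ⟨j, hj, hfe⟩, hminc⟩ :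
      ∃ c, (∃ j, j < c ∧ f j = f c) ∧ ∀ k, k < c → ¬∃ j, j < k ∧ f j = f k :=
    ⟨Nat.find hrep, Nat.find_spec hrep, fun k hk => Nat.find_min hrep hk⟩
  have hmin : ∀ i i', i < i' → i' < c → f i ≠ f i' := by
    intro i i' h1 h2 he
    exact hminc i' h2 ⟨i, h1, he⟩
  have hj0 : j = 0 := min_repeat_zero (B := c) (fun k _ => hadjf k) (fun k _ => hnef k)
    (fun k _ => hpairf k) le_rfl hj hfe hmin
  subst hj0
  have hc1 : c ≠ 1 := by
    intro h; rw [h] at hfe; exact (hadjf 0).ne hfe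
  have hc2 : c ≠ 2 := by
    intro h; rw [h] at hfe; exact hnef 0 hfe.symm
  have hc3 : 3 ≤ c := by omega
  obtain ⟨c', rfl⟩ : ∃ c', c = c'+1 := ⟨c-1, by omega⟩
  have hf1 : f 1 = a := rfl
  have hlastb : f c' = b := by
    have hmem : f c' ∈ G.neighborFinset v0 := by
      rw [mem_neighborFinset]
      have := (hadjf c').symm
      rwa [← hfe] at this
    rw [hN0] at hmem
    rcases Finset.mem_insert.mp hmem with h | h
    · exact absurd (h.trans hf1.symm) (hmin 1 c' (by omega) (by omega)).symm
    · exact Finset.mem_singleton.mp h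
  -- surjectivity via closure
  have hsurj : ∀ v, ∃ i, i ≤ c' ∧ f i = v := by
    refine closure_eq_univ G hG {v | ∃ i, i ≤ c' ∧ f i = v} v0 ⟨0, by omega, rfl⟩ ?_
    rintro u ⟨i, hi, rfl⟩ v hadj
    match i, hi with
    | 0, _ =>
        have hmem : v ∈ G.neighborFinset v0 := by rwa [mem_neighborFinset]
        rw [hN0] at hmem
        rcases Finset.mem_insert.mp hmem with h | h
        · exact ⟨1, by omega, by rw [hf1, h]⟩
        · exact ⟨c', le_rfl, by rw [hlastb, Finset.mem_singleton.mp h]⟩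
    | (i'+1), hi =>
        have hmem : v ∈ G.neighborFinset (f (i'+1)) := by rwa [mem_neighborFinset]
        rw [hpairf i'] at hmem
        rcases Finset.mem_insert.mp hmem with h | h
        · exact ⟨i', by omega, h.symm⟩
        · rw [Finset.mem_singleton] at h
          by_cases h2 : i'+2 ≤ c'
          · exact ⟨i'+2, h2, h.symm⟩
          · have : i'+2 = c'+1 := by omega
            exact ⟨0, by omega, by rw [h, this, ← hfe]⟩
  have huniq : ∀ i j, i ≤ c' → j ≤ c' → f i = f j → i = j := by
    intro i j hi hj' he
    rcases lt_trichotomy i j with h | h | h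
    · exact absurd he (hmin i j h (by omega))
    · exact h
    · exact absurd he.symm (hmin j i h (by omega))
  obtain ⟨m, rfl⟩ : ∃ m, c' = m + 2 := ⟨c'-2, by omega⟩
  refine ⟨m+3, by omega, ?_⟩
  have e_bij : Function.Bijective (fun i : Fin (m+3) => f i.val) := by
    constructor
    · intro i j h
      exact Fin.ext (huniq i.val j.val (by omega) (by omega) h)
    · intro v
      obtain ⟨i, hi, he⟩ := hsurj v
      exact ⟨⟨i, by omega⟩, he⟩
  -- adjacency in terms of indices
  have hstep : ∀ i : ℕ, i ≤ m+2 → G.Adj (f i) (f ((i+1) % (m+3))) := by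
    intro i hi
    by_cases h : i+1 ≤ m+2
    · rw [Nat.mod_eq_of_lt (by omega)]
      exact hadjf i
    · have hi' : i = m+2 := by omega
      subst hi'
      rw [Nat.mod_self]
      have := hadjf (m+2)
      rwa [← hfe] at this
  have hstep' : ∀ i j : ℕ, i ≤ m+2 → j ≤ m+2 → G.Adj (f i) (f j) →
      j = (i+1) % (m+3) ∨ i = (j+1) % (m+3) := by
    intro i j hi hj' hadj
    match i, hi with
    | 0, _ =>
        have hmem : f j ∈ G.neighborFinset v0 := by rwa [mem_neighborFinset] at *
        rw [hN0] at hmem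
        rcases Finset.mem_insert.mp hmem with h | h
        · left
          rw [Nat.mod_eq_of_lt (by omega)]
          exact huniq j 1 hj' (by omega) (by rw [hf1, h])
        · right
          rw [Finset.mem_singleton] at h
          have : j = m+2 := huniq j (m+2) hj' le_rfl (by rw [h, hlastb])
          rw [this, Nat.mod_self]
    | (i'+1), hi =>
        have hmem : f j ∈ G.neighborFinset (f (i'+1)) := by rwa [mem_neighborFinset] at *
        rw [hpairf i'] at hmem
        rcases Finset.mem_insert.mp hmem with h | h
        · right
          have hji : j = i' := huniq j i' hj' (by omega) h
          rw [hji, Nat.mod_eq_of_lt (by omega)]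
        · left
          rw [Finset.mem_singleton] at h
          by_cases h2 : i'+2 ≤ m+2
          · rw [Nat.mod_eq_of_lt (by omega)]
            exact huniq j (i'+2) hj' h2 h
          · have h3 : i'+2 = m+3 := by omega
            have : j = 0 := huniq j 0 hj' (by omega) (by rw [h, h3, ← hfe])
            rw [this, h3, Nat.mod_self]
  refine ⟨(SimpleGraph.Iso.symm ⟨Equiv.ofBijective _ e_bij, ?_⟩ : G ≃g cycleGraph (m+3))⟩
  intro i j
  show G.Adj (f i.val) (f j.val) ↔ (cycleGraph (m+3)).Adj i j
  rw [cycleGraph_adj_iff_val]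
  constructor
  · intro h
    exact hstep' i.val j.val (by omega) (by omega) h
  · rintro (h | h)
    · have := hstep i.val (by omega)
      rwa [← h] at this
    · have := hstep j.val (by omega)
      rw [← h] at this
      exact this.symm

end classify


section fin
variable {m : ℕ}
open Fin.CommRing

lemma adj_eq {u v : Fin (m+3)} (h : (cycleGraph (m+3)).Adj u v) : u = v + 1 ∨ v = u + 1 := by
  rw [cycleGraph_adj] at h
  rcases h with h | h
  · left; rw [sub_eq_iff_eq_add] at h; rw [h]; ring
  · right; rw [sub_eq_iff_eq_add] at h; rw [h]; ring

lemma adj_of_eq {u v : Fin (m+3)} (h : u = v + 1) : (cycleGraph (m+3)).Adj u v := by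
  rw [cycleGraph_adj]
  exact Or.inl (by rw [h]; ring)

lemma two_step {u v w : Fin (m+3)} (h1 : (cycleGraph (m+3)).Adj u v)
    (h2 : (cycleGraph (m+3)).Adj v w) (hne : u ≠ w) : u = w + 2 ∨ w = u + 2 := by
  rcases adj_eq h1 with h1 | h1 <;> rcases adj_eq h2 with h2 | h2
  · left; rw [h1, h2]; ring
  · exact absurd (h1.trans h2.symm) hne
  · exact absurd (add_right_cancel (h1.symm.trans h2)) hne
  · right; rw [h2, h1]; ring

lemma val_add_one (v : Fin (m+3)) : (v + 1).val = (v.val + 1) % (m+3) := by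
  rw [Fin.val_add, Fin.val_one]

lemma val_add_two (v : Fin (m+3)) : (v + 2).val = (v.val + 2) % (m+3) := by
  rw [Fin.val_add]
  have : (2 : Fin (m+3)).val = 2 := by
    rw [Fin.coe_ofNat_eq_mod]
    exact Nat.mod_eq_of_lt (by omega)
  rw [this]

lemma mod3_ne {n a b c : ℕ} (h3 : n % 3 = 0) (ha : a < n) (hb : b < n)
    (hc : c = 1 ∨ c = 2) (h : a = (b + c) % n) : a % 3 ≠ b % 3 := by
  have hn : 3 ≤ n := by rcases Nat.eq_zero_or_pos n with rfl | h'; · omega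
                        · omega
  by_cases hlt : b + c < n
  · rw [Nat.mod_eq_of_lt hlt] at h; omega
  · rw [Nat.mod_eq_sub_mod (by omega), Nat.mod_eq_of_lt (by omega)] at h
    omega

lemma fin3_four (a b c d : Fin 3) : a ≠ b → a ≠ c → a ≠ d → b ≠ c → b ≠ d → c ≠ d → False := by
  fin_cases a <;> fin_cases b <;> fin_cases c <;> fin_cases d <;> decide

lemma fin3_aux (a b c d : Fin 3) (a1 : b ≠ a) (a2 : c ≠ b) (a3 : d ≠ c) (b1 : c ≠ a)
    (b2 : d ≠ b) : d = a := by
  revert a1 a2 a3 b1 b2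
  fin_cases a <;> fin_cases b <;> fin_cases c <;> fin_cases d <;> decide

end fin

open Fin.CommRing in
lemma cycleGraph_coloring (n : ℕ) (hn : 3 ≤ n) (h3 : n % 3 = 0) :
    ∃ φ : Fin n → Fin 3, (∀ u v, (cycleGraph n).Adj u v → φ u ≠ φ v) ∧
      (∀ u v w, (cycleGraph n).Adj u v → (cycleGraph n).Adj v w → u ≠ w → φ u ≠ φ w) := by
  obtain ⟨m, rfl⟩ : ∃ m, n = m + 3 := ⟨n - 3, by omega⟩
  refine ⟨fun i => ⟨i.val % 3, Nat.mod_lt _ (by norm_num)⟩, ?_, ?_⟩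
  · intro u v huv
    simp only [ne_eq, Fin.mk.injEq]
    rcases adj_eq huv with h | h
    · exact mod3_ne h3 u.isLt v.isLt (Or.inl rfl) (by rw [h, val_add_one])
    · exact (mod3_ne h3 v.isLt u.isLt (Or.inl rfl) (by rw [h, val_add_one])).symm
  · intro u v w huv hvw hne
    simp only [ne_eq, Fin.mk.injEq]
    rcases two_step huv hvw hne with h | h
    · exact mod3_ne h3 u.isLt w.isLt (Or.inr rfl) (by rw [h, val_add_two])
    · exact (mod3_ne h3 w.isLt u.isLt (Or.inr rfl) (by rw [h, val_add_two])).symm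

open Fin.CommRing in
lemma cycleGraph_coloring_dvd (n : ℕ) (hn : 3 ≤ n) (φ : Fin n → Fin 3)
    (h1 : ∀ u v, (cycleGraph n).Adj u v → φ u ≠ φ v)
    (h2 : ∀ u v w, (cycleGraph n).Adj u v → (cycleGraph n).Adj v w → u ≠ w → φ u ≠ φ w) :
    n % 3 = 0 := by
  obtain ⟨m, rfl⟩ : ∃ m, n = m + 3 := ⟨n - 3, by omega⟩
  have hadj : ∀ i : Fin (m+3), (cycleGraph (m+3)).Adj (i + 1) i := fun i => adj_of_eq rfl
  have hne2 : ∀ i : Fin (m+3), i + 2 ≠ i := by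
    intro i h
    have := congrArg Fin.val h
    rw [val_add_two] at this
    have : (i.val + 2) % (m+3) = i.val := this
    have hi := i.isLt
    by_cases hlt : i.val + 2 < m + 3
    · rw [Nat.mod_eq_of_lt hlt] at this; omega
    · rw [Nat.mod_eq_sub_mod (by omega), Nat.mod_eq_of_lt (by omega)] at this; omega
  have step : ∀ i : Fin (m+3), φ (i + 3) = φ i := by
    intro i
    have e12 : (i + 2) = (i + 1) + 1 := by ring
    have e23 : (i + 3) = (i + 2) + 1 := by ring
    have a1 : φ (i + 1) ≠ φ i := h1 _ _ (hadj i)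
    have a2 : φ (i + 2) ≠ φ (i + 1) := h1 _ _ (adj_of_eq e12)
    have a3 : φ (i + 3) ≠ φ (i + 2) := h1 _ _ (adj_of_eq e23)
    have b1 : φ (i + 2) ≠ φ i := h2 _ _ _ (adj_of_eq e12) (hadj i) (hne2 i)
    have b2 : φ (i + 3) ≠ φ (i + 1) := h2 _ _ _ (adj_of_eq e23) (adj_of_eq e12)
      (by rw [show i + 3 = (i+1)+2 by ring]; exact hne2 (i+1))
    exact fin3_aux _ _ _ _ a1 a2 a3 b1 b2
  have mult : ∀ (k : ℕ) (i : Fin (m+3)), φ (i + (3 * k : ℕ)) = φ i := by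
    intro k
    induction k with
    | zero => intro i; simp
    | succ k ih =>
        intro i
        have : ((3 * (k+1) : ℕ) : Fin (m+3)) = ((3 * k : ℕ) : Fin (m+3)) + 3 := by
          push_cast [Nat.mul_succ]
          ring
        rw [this, ← add_assoc, step, ih]
  by_contra hmod
  set n := m + 3 with hn'
  have hk : ∃ k : ℕ, (3 * k) % n = 1 := by
    by_cases h1' : n % 3 = 1
    · refine ⟨(2 * n + 1) / 3, ?_⟩
      have h3k : 3 * ((2 * n + 1) / 3) = n * 2 + 1 := by omega
      rw [h3k, Nat.mul_add_mod]
      exact Nat.mod_eq_of_lt (by omega)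
    · refine ⟨(n + 1) / 3, ?_⟩
      have h3k : 3 * ((n + 1) / 3) = n * 1 + 1 := by omega
      rw [h3k, Nat.mul_add_mod]
      exact Nat.mod_eq_of_lt (by omega)
  obtain ⟨k, hk⟩ := hk
  have hcast : ((3 * k : ℕ) : Fin n) = 1 := by
    rw [Fin.ext_iff, Fin.val_natCast, Fin.val_one]
    exact hk
  have := mult k 0
  rw [hcast] at this
  exact h1 _ _ (hadj 0) this

section dist
variable {V : Type} {G : SimpleGraph V}

lemma dist_le_two_iff (hG : G.Connected) {u v : V} (h : u ≠ v) :
    G.dist u v ≤ 2 ↔ (G.Adj u v ∨ ∃ w, G.Adj u w ∧ G.Adj w v) := by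
  constructor
  · intro hd
    obtain ⟨p, hp⟩ := hG.exists_walk_length_eq_dist u v
    rw [← hp] at hd
    cases p with
    | nil => exact absurd rfl h
    | cons h1 q => cases q with
      | nil => exact Or.inl h1
      | cons h2 r => cases r with
        | nil => exact Or.inr ⟨_, h1, h2⟩
        | cons h3 s => simp [SimpleGraph.Walk.length_cons] at hd
  · rintro (hadj | ⟨w, h1, h2⟩)
    · calc G.dist u v ≤ hadj.toWalk.length := SimpleGraph.dist_le _
        _ ≤ 2 := by simp
    · calc G.dist u v ≤ (SimpleGraph.Walk.cons h1 h2.toWalk).length := SimpleGraph.dist_le _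
        _ ≤ 2 := by simp

end dist

/-- coloring of the path graph -/
lemma pathGraph_coloring (n : ℕ) :
    ∃ φ : Fin n → Fin 3, (∀ u v, (pathGraph n).Adj u v → φ u ≠ φ v) ∧
      (∀ u v w, (pathGraph n).Adj u v → (pathGraph n).Adj v w → u ≠ w → φ u ≠ φ w) := by
  refine ⟨fun i => ⟨i.val % 3, Nat.mod_lt _ (by norm_num)⟩, ?_, ?_⟩
  · intro u v huv
    rw [pathGraph_adj] at huv
    simp only [ne_eq, Fin.mk.injEq]
    omega
  · intro u v w huv hvw hne
    rw [pathGraph_adj] at huv hvw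
    have : u.val ≠ w.val := fun hc => hne (Fin.ext hc)
    simp only [ne_eq, Fin.mk.injEq]
    omega


/-- A connected graph is distance-2 3-colorable iff it is a path
or a cycle whose length is divisible by 3. -/
theorem distance2_3colorable_iff_path_or_cycle
    {V : Type} [Fintype V] (G : SimpleGraph V) (hG : G.Connected) :
    (∃ φ : V → Fin 3, ∀ u v : V, u ≠ v → G.dist u v ≤ 2 → φ u ≠ φ v) ↔
      ((∃ n : ℕ, Nonempty (G ≃g SimpleGraph.pathGraph n)) ∨
       (∃ n : ℕ, 3 ≤ n ∧ n % 3 = 0 ∧ Nonempty (G ≃g SimpleGraph.cycleGraph n))) := by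
  classical
  -- reformulate the coloring condition combinatorially
  have key : (∃ φ : V → Fin 3, ∀ u v : V, u ≠ v → G.dist u v ≤ 2 → φ u ≠ φ v) ↔
      (∃ φ : V → Fin 3, (∀ u v, G.Adj u v → φ u ≠ φ v) ∧
        (∀ u v w, G.Adj u v → G.Adj v w → u ≠ w → φ u ≠ φ w)) := by
    constructor
    · rintro ⟨φ, hφ⟩
      refine ⟨φ, fun u v huv => hφ u v huv.ne ((dist_le_two_iff hG huv.ne).2 (Or.inl huv)),
        fun u v w huv hvw hne => hφ u w hne ((dist_le_two_iff hG hne).2 (Or.inr ⟨v, huv, hvw⟩))⟩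
    · rintro ⟨φ, h1, h2⟩
      refine ⟨φ, fun u v hne hd => ?_⟩
      rcases (dist_le_two_iff hG hne).1 hd with hadj | ⟨w, ha, hb⟩
      · exact h1 u v hadj
      · exact h2 u w v ha hb hne
  rw [key]
  constructor
  · rintro ⟨φ, h1, h2⟩
    -- every vertex has degree ≤ 2
    have hdeg : ∀ v, G.degree v ≤ 2 := by
      intro v
      by_contra hlt
      push_neg at hlt
      obtain ⟨p, q, r, hp, hq, hr, hpq, hpr, hqr⟩ := Finset.two_lt_card_iff.mp hlt
      rw [SimpleGraph.mem_neighborFinset] at hp hq hr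
      exact fin3_four (φ v) (φ p) (φ q) (φ r) (h1 v p hp) (h1 v q hq) (h1 v r hr)
        (h2 p v q hp.symm hq hpq) (h2 p v r hp.symm hr hpr) (h2 q v r hq.symm hr hqr)
    by_cases hex : ∃ x, G.degree x ≤ 1
    · obtain ⟨x, hx⟩ := hex
      exact Or.inl (path_case hG hdeg x hx)
    · push_neg at hex
      have hdeg2 : ∀ v, G.degree v = 2 := fun v => le_antisymm (hdeg v) (hex v)
      obtain ⟨n, hcard, ⟨e⟩⟩ := cycle_case hG hdeg2
      refine Or.inr ⟨n, hcard, ?_, ⟨e⟩⟩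
      refine cycleGraph_coloring_dvd _ hcard (φ ∘ e.symm) ?_ ?_
      · intro u v huv
        exact h1 _ _ (e.symm.map_adj_iff.mpr huv)
      · intro u v w huv hvw hne
        exact h2 _ _ _ (e.symm.map_adj_iff.mpr huv) (e.symm.map_adj_iff.mpr hvw)
          (fun hc => hne (e.symm.injective hc))
  · rintro (⟨n, ⟨e⟩⟩ | ⟨n, hn, h3, ⟨e⟩⟩)
    · obtain ⟨φ, h1, h2⟩ := pathGraph_coloring n
      refine ⟨φ ∘ e, fun u v huv => h1 _ _ (e.map_adj_iff.mpr huv),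
        fun u v w huv hvw hne => h2 _ _ _ (e.map_adj_iff.mpr huv) (e.map_adj_iff.mpr hvw)
          (fun hc => hne (e.injective hc))⟩
    · obtain ⟨φ, h1, h2⟩ := cycleGraph_coloring n hn h3
      refine ⟨φ ∘ e, fun u v huv => h1 _ _ (e.map_adj_iff.mpr huv),
        fun u v w huv hvw hne => h2 _ _ _ (e.map_adj_iff.mpr huv) (e.map_adj_iff.mpr hvw)
          (fun hc => hne (e.injective hc))⟩
end

section
/- For every k ≥ 3, the graph N_k (obtained from three disjoint copies of the complete graph K_{k+1}, deleting an edge a_t b_t in the t-th copy for t = 1,2,3, and adding the edges b_1 a_2, b_2 a_3, b_3 a_1) is k-colorable. -/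
/-- The graph `N_k`: three disjoint copies of `K_{k+1}` (copies indexed by `Fin 3`,
with designated vertices `a_t = (t, 0)` and `b_t = (t, 1)` in the `t`-th copy),
where the edges `a_t b_t` are deleted and the edges `b_t a_{t+1}` are added. -/
def Nk (k : ℕ) : SimpleGraph (Fin 3 × Fin (k + 1)) :=
  SimpleGraph.fromRel (fun u v =>
    (u.1 = v.1 ∧ ¬(u.2 = 0 ∧ v.2 = 1) ∧ ¬(u.2 = 1 ∧ v.2 = 0)) ∨
    (u.2 = 1 ∧ v.2 = 0 ∧ v.1 = u.1 + 1))

/-- For every `k ≥ 3`, the graph `N_k` is `k`-colorable. -/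
theorem Nk_colorable (k : ℕ) (hk : 3 ≤ k) : (Nk k).Colorable k := by
  have hk0 : 0 < k := by omega
  refine ⟨SimpleGraph.Coloring.mk
    (fun v => ⟨(v.1.val + (if v.2.val ≤ 1 then 0 else v.2.val - 1)) % k,
      Nat.mod_lt _ hk0⟩) ?_⟩
  rintro u v hadj
  simp only [Nk, SimpleGraph.fromRel_adj] at hadj
  obtain ⟨hne, h⟩ := hadj
  simp only [ne_eq, Fin.mk.injEq]
  intro heq
  have hu2 : u.2.val < k + 1 := u.2.isLt
  have hv2 : v.2.val < k + 1 := v.2.isLt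
  have hgu : (if u.2.val ≤ 1 then 0 else u.2.val - 1) < k := by split <;> omega
  have hgv : (if v.2.val ≤ 1 then 0 else v.2.val - 1) < k := by split <;> omega
  -- common cancellation lemma
  have cancel : ∀ a b x y : ℕ, x < k → y < k → (a + x) % k = (b + y) % k → a = b → x = y := by
    intro a b x y hx hy hmod hab
    subst hab
    have h1 : x ≡ y [MOD k] := Nat.ModEq.add_left_cancel' a hmod
    have := h1.eq_of_lt_of_lt hx hy
    exact this
  rcases h with (⟨h1, h2, h3⟩ | ⟨h1, h2, h3⟩) | (⟨h1, h2, h3⟩ | ⟨h1, h2, h3⟩)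
  · -- same copy, rel u v
    have husnd : u.2.val ≠ v.2.val := by
      intro h; exact hne (Prod.ext h1 (Fin.ext h))
    have hgeq := cancel _ _ _ _ hgu hgv heq (by rw [h1])
    have hone : ((1 : Fin (k+1)) : ℕ) = 1 := by simp [Fin.val_one']; omega
    simp only [Fin.ext_iff, Fin.val_zero, hone] at h2 h3
    split at hgeq <;> split at hgeq <;> omega
  · -- cross edge, rel u v : u.2 = 1, v.2 = 0, v.1 = u.1 + 1
    have hu : u.2.val = 1 := by rw [h1]; simp [Fin.val_one']; omega
    have hv : v.2.val = 0 := by rw [h2]; simp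
    have heq2 : u.1.val % k = v.1.val % k := by simpa [hu, hv] using heq
    have hu1 : u.1.val < 3 := u.1.isLt
    have hv1 : v.1.val < 3 := v.1.isLt
    have hval : v.1.val = (u.1.val + 1) % 3 := by rw [h3]; rfl
    rw [Nat.mod_eq_of_lt (by omega), Nat.mod_eq_of_lt (by omega)] at heq2
    omega
  · -- same copy, rel v u
    have husnd : u.2.val ≠ v.2.val := by
      intro h; exact hne (Prod.ext h1.symm (Fin.ext h))
    have hgeq := cancel _ _ _ _ hgu hgv heq (by rw [h1])
    have hone : ((1 : Fin (k+1)) : ℕ) = 1 := by simp [Fin.val_one']; omega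
    simp only [Fin.ext_iff, Fin.val_zero, hone] at h2 h3
    split at hgeq <;> split at hgeq <;> omega
  · -- cross edge, rel v u : v.2 = 1, u.2 = 0, u.1 = v.1 + 1
    have hv : v.2.val = 1 := by rw [h1]; simp [Fin.val_one']; omega
    have hu : u.2.val = 0 := by rw [h2]; simp
    have heq2 : u.1.val % k = v.1.val % k := by simpa [hu, hv] using heq
    have hu1 : u.1.val < 3 := u.1.isLt
    have hv1 : v.1.val < 3 := v.1.isLt
    have hval : u.1.val = (v.1.val + 1) % 3 := by rw [h3]; rfl
    rw [Nat.mod_eq_of_lt (by omega), Nat.mod_eq_of_lt (by omega)] at heq2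
    omega
end

section
/- There is no anonymous proof-labeling scheme with 1-bit certificates for k-colorability when k ≥ 3. Formally: there is no local decision algorithm A (taking as input a vertex's own label in {0,1} and the multiset of labels in {0,1} of its neighbors, and outputting accept/reject) such that for every connected graph G, G is k-colorable if and only if there exists a labeling ℓ : V(G) → {0,1} making A accept at every vertex. -/
namespace AnonPLS3
open SimpleGraph Finset

lemma sum_ite_lt (m t : ℕ) (ht : t ≤ m) :
    ∑ w : Fin m, (if (w : ℕ) < t then 1 else 0) = t := by
  induction m with
  | zero => simp; omega
  | succ m ih =>
    rcases Nat.lt_or_ge m t with h | h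
    · have ht' : t = m + 1 := by omega
      subst ht'
      rw [Fin.sum_univ_castSucc]
      have hterm : ∀ w : Fin m, ((if ((w.castSucc : Fin (m+1)) : ℕ) < m+1 then 1 else 0) : ℕ) = 1 := by
        intro w
        rw [if_pos]
        simp only [Fin.coe_castSucc]
        omega
      rw [Finset.sum_congr rfl (fun w _ => hterm w)]
      simp [Fin.val_last]
    · rw [Fin.sum_univ_castSucc]
      simp only [Fin.coe_castSucc, Fin.val_last]
      rw [ih h, if_neg (by omega)]
      omega

abbrev NV (n : ℕ) := Fin 3 × Fin (n + 4)

def X (n : ℕ) : Fin (n + 4) := ⟨n + 2, by omega⟩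
def Y (n : ℕ) : Fin (n + 4) := ⟨n + 3, by omega⟩

lemma X_val (n : ℕ) : ((X n : Fin (n+4)) : ℕ) = n + 2 := rfl
lemma Y_val (n : ℕ) : ((Y n : Fin (n+4)) : ℕ) = n + 3 := rfl

def NRel (n : ℕ) (u v : NV n) : Prop :=
  (u.1 = v.1 ∧ u.2 ≠ v.2 ∧ ((u.2 : ℕ) < n + 2 ∨ (v.2 : ℕ) < n + 2)) ∨
  (v.1 = u.1 + 1 ∧ (u.2 : ℕ) = n + 3 ∧ (v.2 : ℕ) = n + 2) ∨
  (u.1 = v.1 + 1 ∧ (u.2 : ℕ) = n + 2 ∧ (v.2 : ℕ) = n + 3)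

instance (n : ℕ) : DecidableRel (NRel n) := fun u v => by unfold NRel; infer_instance

def NG (n : ℕ) : SimpleGraph (NV n) where
  Adj := NRel n
  symm := by
    constructor
    rintro ⟨i, j⟩ ⟨i', j'⟩ (⟨h1, h2, h3⟩ | ⟨h1, h2, h3⟩ | ⟨h1, h2, h3⟩)
    · exact Or.inl ⟨h1.symm, h2.symm, h3.symm⟩
    · exact Or.inr (Or.inr ⟨h1, h3, h2⟩)
    · exact Or.inr (Or.inl ⟨h1, h3, h2⟩)
  loopless := by
    constructor
    rintro ⟨i, j⟩ (⟨h1, h2, h3⟩ | ⟨h1, h2, h3⟩ | ⟨h1, h2, h3⟩)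
    · exact h2 rfl
    · omega
    · omega

lemma NG_adj (n : ℕ) (u v : NV n) : (NG n).Adj u v ↔ NRel n u v := Iff.rfl

instance NGdec (n : ℕ) : DecidableRel (NG n).Adj := fun u v =>
  decidable_of_iff _ (NG_adj n u v).symm

/-- the clique part of gadget `i`, as a Finset of vertices -/
def CF (n : ℕ) (i : Fin 3) : Finset (NV n) :=
  univ.filter (fun u : NV n => u.1 = i ∧ (u.2 : ℕ) < n + 2)

def Sc (n : ℕ) (g : NV n → ℕ) (i : Fin 3) : ℕ :=
  ∑ j' : Fin (n + 4), if (j' : ℕ) < n + 2 then g (i, j') else 0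

lemma sum_CF (n : ℕ) (g : NV n → ℕ) (i : Fin 3) :
    ∑ u ∈ CF n i, g u = Sc n g i := by
  rw [CF, Finset.sum_filter, Fintype.sum_prod_type]
  have h : ∀ i' : Fin 3, (∑ j' : Fin (n+4),
      if (i' = i ∧ ((j' : ℕ) < n + 2)) then g (i', j') else 0)
      = if i' = i then (∑ j' : Fin (n+4), if (j' : ℕ) < n + 2 then g (i', j') else 0) else 0 := by
    intro i'
    by_cases hi : i' = i
    · simp [hi]
    · simp [hi]
  rw [Finset.sum_congr rfl (fun i' _ => h i'), Finset.sum_ite_eq' univ i]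
  simp [Sc]

lemma mem_CF (n : ℕ) (i : Fin 3) (u : NV n) :
    u ∈ CF n i ↔ u.1 = i ∧ (u.2 : ℕ) < n + 2 := by
  simp [CF]

lemma nbrFinset_x (n : ℕ) (i : Fin 3) :
    (NG n).neighborFinset (i, X n) = CF n i ∪ {(i - 1, Y n)} := by
  ext ⟨i', j'⟩
  rw [mem_neighborFinset, NG_adj, Finset.mem_union, mem_CF, Finset.mem_singleton]
  dsimp only [NRel]
  constructor
  · rintro (⟨h1, h2, h3⟩ | ⟨h1, h2, h3⟩ | ⟨h1, h2, h3⟩)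
    · rw [X_val n] at h3
      exact Or.inl ⟨h1.symm, by omega⟩
    · rw [X_val n] at h2; omega
    · refine Or.inr (Prod.ext ?_ (Fin.ext ?_))
      · show i' = i - 1
        rw [h1, add_sub_cancel_right]
      · show (j' : ℕ) = (Y n : ℕ)
        rw [Y_val, h3]
  · rintro (⟨h1, h2⟩ | h)
    · refine Or.inl ⟨h1.symm, ?_, Or.inr h2⟩
      intro he
      have := congrArg Fin.val he
      rw [X_val] at this
      omega
    · have h1 : i' = i - 1 := congrArg Prod.fst h
      have h2 : j' = Y n := congrArg Prod.snd h
      refine Or.inr (Or.inr ⟨?_, X_val n, by rw [h2, Y_val]⟩)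
      rw [h1, sub_add_cancel]

lemma nbrFinset_y (n : ℕ) (i : Fin 3) :
    (NG n).neighborFinset (i, Y n) = CF n i ∪ {(i + 1, X n)} := by
  ext ⟨i', j'⟩
  rw [mem_neighborFinset, NG_adj, Finset.mem_union, mem_CF, Finset.mem_singleton]
  dsimp only [NRel]
  constructor
  · rintro (⟨h1, h2, h3⟩ | ⟨h1, h2, h3⟩ | ⟨h1, h2, h3⟩)
    · rw [Y_val n] at h3
      exact Or.inl ⟨h1.symm, by omega⟩
    · refine Or.inr (Prod.ext ?_ (Fin.ext ?_))
      · exact h1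
      · show (j' : ℕ) = (X n : ℕ)
        rw [X_val, h3]
    · rw [Y_val n] at h2; omega
  · rintro (⟨h1, h2⟩ | h)
    · refine Or.inl ⟨h1.symm, ?_, Or.inr h2⟩
      intro he
      have := congrArg Fin.val he
      rw [Y_val] at this
      omega
    · have h1 : i' = i + 1 := congrArg Prod.fst h
      have h2 : j' = X n := congrArg Prod.snd h
      exact Or.inr (Or.inl ⟨h1, Y_val n, by rw [h2, X_val]⟩)

lemma nbrFinset_c (n : ℕ) (i : Fin 3) (j : Fin (n+4)) (hj : (j : ℕ) < n + 2) :
    (NG n).neighborFinset (i, j) = ((CF n i).erase (i, j)) ∪ {(i, X n), (i, Y n)} := by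
  ext ⟨i', j'⟩
  rw [mem_neighborFinset, NG_adj, Finset.mem_union, Finset.mem_erase, mem_CF,
    Finset.mem_insert, Finset.mem_singleton]
  dsimp only [NRel]
  constructor
  · rintro (⟨h1, h2, h3⟩ | ⟨h1, h2, h3⟩ | ⟨h1, h2, h3⟩)
    · -- same gadget, j' ≠ j
      by_cases hc : (j' : ℕ) < n + 2
      · refine Or.inl ⟨?_, h1.symm, hc⟩
        intro he
        exact h2 (congrArg Prod.snd he).symm
      · have : (j' : ℕ) = n + 2 ∨ (j' : ℕ) = n + 3 := by
          have := j'.isLt; omega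
        rcases this with hv | hv
        · exact Or.inr (Or.inl (Prod.ext h1.symm (Fin.ext (by rw [hv, X_val]))))
        · exact Or.inr (Or.inr (Prod.ext h1.symm (Fin.ext (by rw [hv, Y_val]))))
    · omega
    · omega
  · rintro (⟨h1, h2, h3⟩ | h | h)
    · refine Or.inl ⟨h2.symm, ?_, Or.inl hj⟩
      intro he
      exact h1 (Prod.ext h2 he.symm)
    · have h1 : i' = i := congrArg Prod.fst h
      have h2 : j' = X n := congrArg Prod.snd h
      refine Or.inl ⟨h1.symm, ?_, Or.inl hj⟩
      intro he
      rw [← he] at h2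
      have := congrArg Fin.val h2
      rw [X_val] at this
      omega
    · have h1 : i' = i := congrArg Prod.fst h
      have h2 : j' = Y n := congrArg Prod.snd h
      refine Or.inl ⟨h1.symm, ?_, Or.inl hj⟩
      intro he
      rw [← he] at h2
      have := congrArg Fin.val h2
      rw [Y_val] at this
      omega


lemma disj_x (n : ℕ) (i : Fin 3) : Disjoint (CF n i) ({(i - 1, Y n)} : Finset (NV n)) := by
  rw [Finset.disjoint_singleton_right, mem_CF]
  rintro ⟨-, h⟩
  rw [Y_val] at h
  omega

lemma disj_y (n : ℕ) (i : Fin 3) : Disjoint (CF n i) ({(i + 1, X n)} : Finset (NV n)) := by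
  rw [Finset.disjoint_singleton_right, mem_CF]
  rintro ⟨-, h⟩
  rw [X_val] at h
  omega

lemma sum_nbr_x (n : ℕ) (g : NV n → ℕ) (i : Fin 3) :
    ∑ u ∈ (NG n).neighborFinset (i, X n), g u = Sc n g i + g (i - 1, Y n) := by
  rw [nbrFinset_x, Finset.sum_union (disj_x n i), sum_CF, Finset.sum_singleton]

lemma sum_nbr_y (n : ℕ) (g : NV n → ℕ) (i : Fin 3) :
    ∑ u ∈ (NG n).neighborFinset (i, Y n), g u = Sc n g i + g (i + 1, X n) := by
  rw [nbrFinset_y, Finset.sum_union (disj_y n i), sum_CF, Finset.sum_singleton]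

lemma XY_ne (n : ℕ) (i : Fin 3) : ((i, X n) : NV n) ≠ (i, Y n) := by
  intro h
  have := congrArg Fin.val (congrArg Prod.snd h)
  rw [X_val, Y_val] at this
  omega

lemma disj_c (n : ℕ) (i : Fin 3) (j : Fin (n+4)) :
    Disjoint ((CF n i).erase (i, j)) ({(i, X n), (i, Y n)} : Finset (NV n)) := by
  rw [Finset.disjoint_insert_right, Finset.disjoint_singleton_right]
  constructor
  · intro h
    have h2 := (Finset.mem_erase.mp h).2
    rw [mem_CF] at h2
    have := h2.2
    rw [show ((i, X n) : NV n).2 = X n from rfl, X_val] at this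
    omega
  · intro h
    have h2 := (Finset.mem_erase.mp h).2
    rw [mem_CF] at h2
    have := h2.2
    rw [show ((i, Y n) : NV n).2 = Y n from rfl, Y_val] at this
    omega

lemma sum_nbr_c (n : ℕ) (g : NV n → ℕ) (i : Fin 3) (j : Fin (n+4)) (hj : (j : ℕ) < n + 2) :
    g (i, j) + ∑ u ∈ (NG n).neighborFinset (i, j), g u
      = Sc n g i + g (i, X n) + g (i, Y n) := by
  rw [nbrFinset_c n i j hj, Finset.sum_union (disj_c n i j),
    Finset.sum_pair (XY_ne n i)]
  have hmem : ((i, j) : NV n) ∈ CF n i := (mem_CF n i (i,j)).mpr ⟨rfl, hj⟩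
  have h := Finset.add_sum_erase (CF n i) g hmem
  rw [sum_CF] at h
  omega

lemma Sc_const (n : ℕ) (i : Fin 3) : Sc n (fun _ => 1) i = n + 2 := by
  rw [Sc]
  exact sum_ite_lt (n+4) (n+2) (by omega)

lemma deg_x (n : ℕ) (i : Fin 3) : ((NG n).neighborFinset (i, X n)).card = n + 3 := by
  rw [Finset.card_eq_sum_ones, sum_nbr_x n (fun _ => 1) i, Sc_const]

lemma deg_y (n : ℕ) (i : Fin 3) : ((NG n).neighborFinset (i, Y n)).card = n + 3 := by
  rw [Finset.card_eq_sum_ones, sum_nbr_y n (fun _ => 1) i, Sc_const]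

lemma deg_c (n : ℕ) (i : Fin 3) (j : Fin (n+4)) (hj : (j : ℕ) < n + 2) :
    ((NG n).neighborFinset (i, j)).card = n + 3 := by
  have h := sum_nbr_c n (fun _ => 1) i j hj
  rw [Sc_const] at h
  rw [Finset.card_eq_sum_ones]
  omega

lemma NG_colorable (n : ℕ) : (NG n).Colorable (n + 3) := by
  refine ⟨SimpleGraph.Coloring.mk (fun u =>
    if h : (u.2 : ℕ) < n + 2 then
      (if (u.2 : ℕ) < (u.1 : ℕ) then ⟨u.2, by omega⟩ else ⟨(u.2 : ℕ) + 1, by omega⟩)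
    else ⟨(u.1 : ℕ), by have := u.1.isLt; omega⟩) ?_⟩
  rintro ⟨i, j⟩ ⟨i', j'⟩ hadj
  rw [NG_adj] at hadj
  dsimp only [NRel] at hadj
  intro hcol
  dsimp only at hcol
  rcases hadj with ⟨h1, h2, h3⟩ | ⟨h1, h2, h3⟩ | ⟨h1, h2, h3⟩
  · -- same gadget
    subst h1
    have hjj : (j : ℕ) ≠ (j' : ℕ) := fun h => h2 (Fin.ext h)
    rcases h3 with hc | hc <;>
      (split_ifs at hcol <;>
        first
          | (have := congrArg Fin.val hcol; dsimp at this; omega)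
          | omega)
  · -- y_i -- x_{i+1}
    rw [dif_neg (by omega), dif_neg (by omega)] at hcol
    have hv := congrArg Fin.val hcol
    dsimp at hv
    have hii : i = i' := Fin.ext hv
    rw [h1] at hii
    have hne : (i : Fin 3) ≠ i + 1 := by fin_cases i <;> decide
    exact hne hii
  · -- x_{i+1} -- y_i (reversed)
    rw [dif_neg (by omega), dif_neg (by omega)] at hcol
    have hv := congrArg Fin.val hcol
    dsimp at hv
    have hii : i = i' := Fin.ext hv
    rw [h1] at hii
    have hne : (i' : Fin 3) ≠ i' + 1 := by fin_cases i' <;> decide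
    exact hne hii.symm


def O4 (n : ℕ) : Fin (n + 4) := ⟨0, by omega⟩

lemma O4_val (n : ℕ) : ((O4 n : Fin (n+4)) : ℕ) = 0 := rfl

lemma adj_base (n : ℕ) (i : Fin 3) (j : Fin (n+4)) (hj : j ≠ O4 n) :
    (NG n).Adj (i, j) (i, O4 n) :=
  Or.inl ⟨rfl, hj, Or.inr (show ((O4 n : Fin (n+4)) : ℕ) < n + 2 by rw [O4_val]; omega)⟩

lemma step_reach (n : ℕ) (i : Fin 3) :
    (NG n).Reachable (i, O4 n) (i + 1, O4 n) := by
  have a1 : (NG n).Adj (i, O4 n) (i, Y n) := by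
    refine Or.inl ⟨rfl, ?_, Or.inl (show ((O4 n : Fin (n+4)) : ℕ) < n + 2 by rw [O4_val]; omega)⟩
    intro h
    have := congrArg Fin.val h
    rw [Y_val] at this
    rw [O4_val] at this
    exact absurd this (by omega)
  have a2 : (NG n).Adj (i, Y n) (i + 1, X n) :=
    Or.inr (Or.inl ⟨rfl, Y_val n, X_val n⟩)
  have a3 : (NG n).Adj (i + 1, X n) (i + 1, O4 n) := by
    apply adj_base
    intro h
    have := congrArg Fin.val h
    rw [X_val] at this
    rw [O4_val] at this
    exact absurd this (by omega)
  exact ((a1.reachable.trans a2.reachable).trans a3.reachable)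

lemma base_reach (n : ℕ) : ∀ i : Fin 3, (NG n).Reachable (0, O4 n) (i, O4 n) := by
  intro i
  fin_cases i
  · rfl
  · exact step_reach n 0
  · exact (step_reach n 0).trans (step_reach n 1)

lemma NG_connected (n : ℕ) : (NG n).Connected := by
  rw [SimpleGraph.connected_iff]
  refine ⟨?_, ⟨(0, O4 n)⟩⟩
  intro u v
  have h : ∀ w : NV n, (NG n).Reachable w (w.1, O4 n) := by
    rintro ⟨i, j⟩
    by_cases hj : j = O4 n
    · rw [hj]
    · exact (adj_base n i j hj).reachable
  have h2 : ∀ w : NV n, (NG n).Reachable (0, O4 n) (w.1, O4 n) := fun w => base_reach n w.1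
  exact (((h u).trans ((h2 u).symm)).trans (h2 v)).trans (h v).symm


def b2n (b : Bool) : ℕ := cond b 1 0

def symLab (c ξ η : Fin 3 → Bool) (p : Fin 3 × Fin 3) : Bool :=
  if p.2 = 0 then c p.1 else if p.2 = 1 then ξ p.1 else η p.1

def symVal (c ξ η : Fin 3 → Bool) (p : Fin 3 × Fin 3) : Bool × ℕ :=
  if p.2 = 0 then (c p.1, b2n (c p.1) + b2n (ξ p.1) + b2n (η p.1))
  else if p.2 = 1 then (c p.1, 2 * b2n (c p.1) + b2n (η (p.1 - 1)))
  else (c p.1, 2 * b2n (c p.1) + b2n (ξ (p.1 + 1)))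

set_option maxHeartbeats 1000000 in
lemma core : ∀ c ξ η : Fin 3 → Bool,
    (∃ p, symLab c ξ η p = false ∧ symVal c ξ η p = (false, 0)) ∨
    (∃ p, symLab c ξ η p = true ∧ symVal c ξ η p = (true, 3)) ∨
    (∃ p q, symLab c ξ η p = true ∧ symLab c ξ η q = false ∧
      (symVal c ξ η q).1 = (symVal c ξ η p).1 ∧
      (symVal c ξ η q).2 = (symVal c ξ η p).2 + 1) := by decide

def toB (a : Fin 2) : Bool := a = 1

lemma toB_spec : ∀ a : Fin 2, a = (if toB a then 1 else 0) := by decide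
lemma val_eq_b2n : ∀ a : Fin 2, (a : ℕ) = b2n (toB a) := by decide

lemma count_zero_add_count_one (m : Multiset (Fin 2)) :
    m.count 0 + m.count 1 = Multiset.card m := by
  induction m using Multiset.induction with
  | empty => simp
  | cons a s ih => fin_cases a <;> simp [Multiset.count_cons] <;> omega

lemma ms_eq_of_card_count (m m' : Multiset (Fin 2))
    (hc : Multiset.card m = Multiset.card m')
    (h1 : m.count 1 = m'.count 1) : m = m' := by
  rw [Multiset.ext]
  intro a
  fin_cases a
  · show m.count 0 = m'.count 0
    have h := count_zero_add_count_one m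
    have h' := count_zero_add_count_one m'
    omega
  · exact h1

lemma count_one_map {α : Type} (s : Finset α) (ℓ : α → Fin 2) :
    (Multiset.map ℓ s.val).count 1 = ∑ u ∈ s, (ℓ u : ℕ) := by
  classical
  rw [Multiset.count_map]
  have hval : Multiset.filter (fun a => (1 : Fin 2) = ℓ a) s.val
      = (s.filter (fun a => (1 : Fin 2) = ℓ a)).val := by
    simp [Finset.filter_val]
  rw [hval]
  have h2 : (s.filter (fun a => (1 : Fin 2) = ℓ a)).card
      = ∑ u ∈ s, if (1 : Fin 2) = ℓ u then 1 else 0 := Finset.card_filter _ s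
  have h3 : ∀ a : Fin 2, (if (1 : Fin 2) = a then 1 else 0) = (a : ℕ) := by decide
  calc Multiset.card (s.filter (fun a => (1 : Fin 2) = ℓ a)).val
      = (s.filter (fun a => (1 : Fin 2) = ℓ a)).card := rfl
    _ = ∑ u ∈ s, if (1 : Fin 2) = ℓ u then 1 else 0 := h2
    _ = ∑ u ∈ s, (ℓ u : ℕ) := Finset.sum_congr rfl (fun u _ => h3 (ℓ u))

def ones (n : ℕ) (ℓ : NV n → Fin 2) (v : NV n) : ℕ :=
  (Multiset.map ℓ ((NG n).neighborFinset v).val).count 1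

lemma ones_eq_sum (n : ℕ) (ℓ : NV n → Fin 2) (v : NV n) :
    ones n ℓ v = ∑ u ∈ (NG n).neighborFinset v, (ℓ u : ℕ) :=
  count_one_map _ _

theorem scorematch (n : ℕ) (ℓ : NV n → Fin 2) :
    (∃ v, ℓ v = 0 ∧ ones n ℓ v = 0) ∨
    (∃ v, ℓ v = 1 ∧ ones n ℓ v = n + 3) ∨
    (∃ u v, ℓ u = 1 ∧ ℓ v = 0 ∧ ones n ℓ v = ones n ℓ u + 1) := by
  by_cases hmono : ∀ i : Fin 3, ∀ j j' : Fin (n+4),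
      (j : ℕ) < n+2 → (j' : ℕ) < n+2 → ℓ (i, j) = ℓ (i, j')
  case neg =>
    push_neg at hmono
    obtain ⟨i, j, j', hj, hj', hne⟩ := hmono
    have key : ∀ (a b : Fin (n+4)), (a : ℕ) < n+2 → (b : ℕ) < n+2 →
        ℓ (i, a) = 1 → ℓ (i, b) = 0 →
        ones n ℓ (i, b) = ones n ℓ (i, a) + 1 := by
      intro a b ha hb h1 h0
      have ea := sum_nbr_c n (fun w => (ℓ w : ℕ)) i a ha
      have eb := sum_nbr_c n (fun w => (ℓ w : ℕ)) i b hb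
      simp only [h1, h0] at ea eb
      rw [ones_eq_sum, ones_eq_sum]
      omega
    have hcases : ∀ a : Fin 2, a = 0 ∨ a = 1 := by decide
    rcases hcases (ℓ (i, j)) with h1 | h1 <;> rcases hcases (ℓ (i, j')) with h2 | h2
    · exact absurd (h1.trans h2.symm) hne
    · exact Or.inr (Or.inr ⟨(i, j'), (i, j), h2, h1, key j' j hj' hj h2 h1⟩)
    · exact Or.inr (Or.inr ⟨(i, j), (i, j'), h1, h2, key j j' hj hj' h1 h2⟩)
    · exact absurd (h1.trans h2.symm) hne
  case pos =>
    set c : Fin 3 → Bool := fun i => toB (ℓ (i, O4 n)) with hc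
    set ξ : Fin 3 → Bool := fun i => toB (ℓ (i, X n)) with hξ
    set η : Fin 3 → Bool := fun i => toB (ℓ (i, Y n)) with hη
    have hO4lt : ((O4 n : Fin (n+4)) : ℕ) < n + 2 := by rw [O4_val]; omega
    have hSc : ∀ i, Sc n (fun w => (ℓ w : ℕ)) i = (n+2) * b2n (c i) := by
      intro i
      rw [Sc]
      have hpt : ∀ j' : Fin (n+4), (if (j' : ℕ) < n + 2 then ((ℓ (i, j') : ℕ)) else 0)
          = b2n (c i) * (if (j' : ℕ) < n + 2 then 1 else 0) := by
        intro j'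
        by_cases hlt : (j' : ℕ) < n + 2
        · rw [if_pos hlt, if_pos hlt, mul_one, hmono i j' (O4 n) hlt hO4lt]
          exact val_eq_b2n _
        · rw [if_neg hlt, if_neg hlt, mul_zero]
      calc ∑ j' : Fin (n+4), (if (j' : ℕ) < n + 2 then ((ℓ (i, j') : ℕ)) else 0)
          = ∑ j' : Fin (n+4), b2n (c i) * (if (j' : ℕ) < n + 2 then 1 else 0) :=
            Finset.sum_congr rfl (fun j' _ => hpt j')
        _ = b2n (c i) * ∑ j' : Fin (n+4), (if (j' : ℕ) < n + 2 then 1 else 0) := by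
            rw [← Finset.mul_sum]
        _ = (n+2) * b2n (c i) := by rw [sum_ite_lt (n+4) (n+2) (by omega)]; ring
    have hones_x : ∀ i, ones n ℓ (i, X n) = (n+2) * b2n (c i) + b2n (η (i-1)) := by
      intro i
      rw [ones_eq_sum]
      have h := sum_nbr_x n (fun w => (ℓ w : ℕ)) i
      simp only at h
      rw [h, hSc]
      congr 1
      exact val_eq_b2n _
    have hones_y : ∀ i, ones n ℓ (i, Y n) = (n+2) * b2n (c i) + b2n (ξ (i+1)) := by
      intro i
      rw [ones_eq_sum]
      have h := sum_nbr_y n (fun w => (ℓ w : ℕ)) i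
      simp only at h
      rw [h, hSc]
      congr 1
      exact val_eq_b2n _
    have hones_c : ∀ i, ones n ℓ (i, O4 n) + b2n (c i)
        = (n+2) * b2n (c i) + b2n (ξ i) + b2n (η i) := by
      intro i
      rw [ones_eq_sum]
      have h := sum_nbr_c n (fun w => (ℓ w : ℕ)) i (O4 n) hO4lt
      simp only at h
      rw [hSc] at h
      have e1 : ((ℓ (i, O4 n) : ℕ)) = b2n (c i) := val_eq_b2n _
      have e2 : ((ℓ (i, X n) : ℕ)) = b2n (ξ i) := val_eq_b2n _
      have e3 : ((ℓ (i, Y n) : ℕ)) = b2n (η i) := val_eq_b2n _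
      omega
    set vtx : Fin 3 × Fin 3 → NV n :=
      fun p => (p.1, if p.2 = 0 then O4 n else if p.2 = 1 then X n else Y n) with hvtx
    have hlab : ∀ p, ℓ (vtx p) = (if symLab c ξ η p then 1 else 0) := by
      rintro ⟨i, r⟩
      fin_cases r <;> exact toB_spec _
    have hval : ∀ p, ones n ℓ (vtx p)
        = (cond (symVal c ξ η p).1 n 0) + (symVal c ξ η p).2 := by
      rintro ⟨i, r⟩
      fin_cases r
      · show ones n ℓ (i, O4 n) = (cond (c i) n 0) + (b2n (c i) + b2n (ξ i) + b2n (η i))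
        have h := hones_c i
        cases hci : c i <;> rw [hci] at h <;>
          simp only [b2n, Bool.cond_false, Bool.cond_true] at h ⊢ <;> omega
      · show ones n ℓ (i, X n) = (cond (c i) n 0) + (2 * b2n (c i) + b2n (η (i - 1)))
        have h := hones_x i
        cases hci : c i <;> rw [hci] at h <;>
          simp only [b2n, Bool.cond_false, Bool.cond_true] at h ⊢ <;> omega
      · show ones n ℓ (i, Y n) = (cond (c i) n 0) + (2 * b2n (c i) + b2n (ξ (i + 1)))
        have h := hones_y i
        cases hci : c i <;> rw [hci] at h <;>
          simp only [b2n, Bool.cond_false, Bool.cond_true] at h ⊢ <;> omega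
    rcases core c ξ η with ⟨p, hf, hv⟩ | ⟨p, hf, hv⟩ | ⟨p, q, hp, hq, h1, h2⟩
    · refine Or.inl ⟨vtx p, ?_, ?_⟩
      · rw [hlab, hf]; rfl
      · rw [hval, hv]; rfl
    · refine Or.inr (Or.inl ⟨vtx p, ?_, ?_⟩)
      · rw [hlab, hf]; rfl
      · rw [hval, hv]
        show n + 3 = n + 3
        rfl
    · refine Or.inr (Or.inr ⟨vtx p, vtx q, ?_, ?_, ?_⟩)
      · rw [hlab, hp]; rfl
      · rw [hlab, hq]; rfl
      · rw [hval, hval, h1, h2]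
        omega


lemma top_neighborFinset {V : Type} [Fintype V] [DecidableEq V] (v : V) :
    (⊤ : SimpleGraph V).neighborFinset v = Finset.univ.erase v := by
  ext w
  simp only [mem_neighborFinset, SimpleGraph.top_adj, Finset.mem_erase,
    Finset.mem_univ, and_true]
  exact ne_comm

lemma top_not_colorable (k : ℕ) : ¬ (⊤ : SimpleGraph (Fin (k+1))).Colorable k := by
  rintro ⟨C⟩
  have hinj : Function.Injective C := by
    intro a b h
    by_contra hne
    exact C.valid ((SimpleGraph.top_adj a b).mpr hne) h
  have := Fintype.card_le_of_injective C hinj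
  simp at this

lemma deg_all (n : ℕ) : ∀ v : NV n, ((NG n).neighborFinset v).card = n + 3 := by
  rintro ⟨i, j⟩
  by_cases h1 : (j : ℕ) < n + 2
  · exact deg_c n i j h1
  · by_cases h2 : (j : ℕ) = n + 2
    · have : j = X n := Fin.ext (by rw [h2, X_val])
      rw [this]; exact deg_x n i
    · have h3 : (j : ℕ) = n + 3 := by have := j.isLt; omega
      have : j = Y n := Fin.ext (by rw [h3, Y_val])
      rw [this]; exact deg_y n i

theorem key (n : ℕ) :
    ¬ ∃ A : Fin 2 → Multiset (Fin 2) → Bool,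
      ∀ (V : Type) [Fintype V] (G : SimpleGraph V) [DecidableRel G.Adj],
        G.Connected →
        (G.Colorable (n + 3) ↔
          ∃ ℓ : V → Fin 2,
            ∀ v : V, A (ℓ v) (Multiset.map ℓ (G.neighborFinset v).val) = true) := by
  rintro ⟨A, hA⟩
  obtain ⟨ℓ, hℓ⟩ := (hA (NV n) (NG n) (NG_connected n)).mp (NG_colorable n)
  -- generic construction of an accepting labeling on K_{n+4} from witnesses
  have build : ∀ (t : ℕ), t ≤ n + 4 →
      (t < n + 4 → ∃ v0 : NV n, ℓ v0 = 0 ∧ ones n ℓ v0 = t) →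
      (0 < t → ∃ u0 : NV n, ℓ u0 = 1 ∧ ones n ℓ u0 + 1 = t) → False := by
    intro t ht h0 h1
    set ℓ' : Fin (n+4) → Fin 2 := fun u => if (u : ℕ) < t then 1 else 0 with hℓ'
    have hval' : ∀ u : Fin (n+4), ((ℓ' u : ℕ)) = if (u : ℕ) < t then 1 else 0 := by
      intro u
      rw [hℓ']
      by_cases h : (u : ℕ) < t
      · rw [if_pos h]; simp [if_pos h]
      · rw [if_neg h]; simp [if_neg h]
    have hsumuniv : ∑ u : Fin (n+4), ((ℓ' u : ℕ)) = t := by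
      rw [Finset.sum_congr rfl (fun u _ => hval' u)]
      exact sum_ite_lt (n+4) t ht
    have hcount : ∀ w : Fin (n+4),
        (Multiset.map ℓ' ((⊤ : SimpleGraph (Fin (n+4))).neighborFinset w).val).count 1
          + ((ℓ' w : ℕ)) = t := by
      intro w
      rw [count_one_map, top_neighborFinset]
      have h := Finset.add_sum_erase Finset.univ (fun u => ((ℓ' u : ℕ))) (Finset.mem_univ w)
      omega
    have hcardK : ∀ w : Fin (n+4),
        Multiset.card (Multiset.map ℓ' ((⊤ : SimpleGraph (Fin (n+4))).neighborFinset w).val)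
          = n + 3 := by
      intro w
      rw [Multiset.card_map, top_neighborFinset]
      show (Finset.univ.erase w).card = n + 3
      rw [Finset.card_erase_of_mem (Finset.mem_univ w), Finset.card_univ, Fintype.card_fin]
      omega
    have haccept : ∀ w : Fin (n+4),
        A (ℓ' w) (Multiset.map ℓ' ((⊤ : SimpleGraph (Fin (n+4))).neighborFinset w).val) = true := by
      intro w
      by_cases hw : (w : ℕ) < t
      · obtain ⟨u0, hu1, hu2⟩ := h1 (by omega)
        have hlw : ℓ' w = ℓ u0 := by
          show (if (w : ℕ) < t then (1 : Fin 2) else 0) = ℓ u0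
          rw [if_pos hw, hu1]
        have hms : Multiset.map ℓ' ((⊤ : SimpleGraph (Fin (n+4))).neighborFinset w).val
            = Multiset.map ℓ ((NG n).neighborFinset u0).val := by
          apply ms_eq_of_card_count
          · rw [hcardK, Multiset.card_map]
            exact (deg_all n u0).symm
          · have hc := hcount w
            have hv := hval' w
            rw [if_pos hw] at hv
            show _ = ones n ℓ u0
            omega
        rw [hlw, hms]
        exact hℓ u0
      · obtain ⟨v0, hv1, hv2⟩ := h0 (by have := w.isLt; omega)
        have hlw : ℓ' w = ℓ v0 := by
          show (if (w : ℕ) < t then (1 : Fin 2) else 0) = ℓ v0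
          rw [if_neg hw, hv1]
        have hms : Multiset.map ℓ' ((⊤ : SimpleGraph (Fin (n+4))).neighborFinset w).val
            = Multiset.map ℓ ((NG n).neighborFinset v0).val := by
          apply ms_eq_of_card_count
          · rw [hcardK, Multiset.card_map]
            exact (deg_all n v0).symm
          · have hc := hcount w
            have hv := hval' w
            rw [if_neg hw] at hv
            show _ = ones n ℓ v0
            omega
        rw [hlw, hms]
        exact hℓ v0
    have hcol : (⊤ : SimpleGraph (Fin (n+4))).Colorable (n+3) :=
      (hA (Fin (n+4)) ⊤ SimpleGraph.connected_top).mpr ⟨ℓ', haccept⟩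
    exact top_not_colorable (n+3) hcol
  rcases scorematch n ℓ with ⟨v, hv0, hv1⟩ | ⟨v, hv0, hv1⟩ | ⟨u, v, hu0, hv0, he⟩
  · exact build 0 (by omega) (fun _ => ⟨v, hv0, hv1⟩) (fun h => absurd h (by omega))
  · exact build (n+4) (by omega) (fun h => absurd h (by omega))
      (fun _ => ⟨v, hv0, by omega⟩)
  · have htle : ones n ℓ v ≤ n + 3 := by
      have h1 := Multiset.count_le_card 1 (Multiset.map ℓ ((NG n).neighborFinset v).val)
      have h2 : Multiset.card (Multiset.map ℓ ((NG n).neighborFinset v).val) = n + 3 := by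
        rw [Multiset.card_map]
        exact deg_all n v
      rw [h2] at h1
      exact h1
    exact build (ones n ℓ v) (by omega) (fun _ => ⟨v, hv0, rfl⟩)
      (fun _ => ⟨u, hu0, he.symm⟩)

end AnonPLS3

/-- For `k ≥ 3`, there is no anonymous proof-labeling scheme with 1-bit
certificates for `k`-colorability: no local decision algorithm `A` (taking a
vertex's own label and the multiset of its neighbors' labels) is such that a
connected graph is `k`-colorable iff some binary labeling makes `A` accept at
every vertex. -/
theorem no_anonymous_binary_certification_of_colorability (k : ℕ) (hk : 3 ≤ k) :
    ¬ ∃ A : Fin 2 → Multiset (Fin 2) → Bool,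
      ∀ (V : Type) [Fintype V] (G : SimpleGraph V) [DecidableRel G.Adj],
        G.Connected →
        (G.Colorable k ↔
          ∃ ℓ : V → Fin 2,
            ∀ v : V, A (ℓ v) (Multiset.map ℓ (G.neighborFinset v).val) = true) := by
  obtain ⟨n, rfl⟩ : ∃ n, k = n + 3 := ⟨k - 3, by omega⟩
  exact AnonPLS3.key n
end

section
/- The following 1-bit certification correctly recognizes paths and cycles of length divisible by 3: a connected graph G admits a labeling ℓ : V(G) → {0,1} such that every vertex v satisfies [deg(v) ≤ 2, and if deg(v) = 2 then exactly one vertex of N[v] is labeled 1] if and only if G is a path or a cycle of length ≡ 0 (mod 3). -/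
open SimpleGraph

variable {V : Type} {G : SimpleGraph V}

lemma myGetVert_inj {u v : V} {p : G.Walk u v} (hp : p.IsPath) :
    ∀ {i j : ℕ}, i ≤ p.length → j ≤ p.length → p.getVert i = p.getVert j → i = j := by
  induction p with
  | nil => intro i j hi hj _; simp at hi hj; omega
  | @cons a b c h q ih =>
    intro i j hi hj hij
    rw [Walk.cons_isPath_iff] at hp
    match i, j with
    | 0, 0 => rfl
    | 0, j+1 =>
      exfalso
      simp only [Walk.getVert_zero, Walk.getVert_cons_succ] at hij
      exact hp.2 (Walk.mem_support_iff_exists_getVert.2 ⟨j, hij.symm, by simpa using hj⟩)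
    | i+1, 0 =>
      exfalso
      simp only [Walk.getVert_zero, Walk.getVert_cons_succ] at hij
      exact hp.2 (Walk.mem_support_iff_exists_getVert.2 ⟨i, hij, by simpa using hi⟩)
    | i+1, j+1 =>
      simp only [Walk.getVert_cons_succ] at hij
      have := ih hp.1 (by simpa using hi) (by simpa using hj) hij
      omega

lemma myIsPath_concat {u v w : V} {p : G.Walk u v} (hp : p.IsPath) (h : G.Adj v w)
    (hw : w ∉ p.support) : (p.concat h).IsPath := by
  rw [← Walk.isPath_reverse_iff, Walk.concat, Walk.reverse_append]
  simp only [Walk.reverse_cons, Walk.reverse_nil, Walk.nil_append]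
  exact (hp.reverse).cons (by simpa using hw)

lemma crossing {s : Set V} : ∀ {u w : V}, u ∈ s → w ∉ s → G.Walk u w →
    ∃ a b, a ∈ s ∧ b ∉ s ∧ G.Adj a b := by
  intro u w hu hw q
  induction q with
  | nil => exact absurd hu hw
  | @cons a b c h q ih =>
    by_cases hb : b ∈ s
    · exact ih hb hw
    · exact ⟨a, b, hu, hb, h⟩

lemma nf_eq_pair [Fintype V] [DecidableEq V] [DecidableRel G.Adj] {u a b : V}
    (hdeg : G.degree u ≤ 2)
    (h1 : G.Adj u a) (h2 : G.Adj u b) (hab : a ≠ b) : G.neighborFinset u = {a, b} := by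
  have hsub : ({a, b} : Finset V) ⊆ G.neighborFinset u := by
    intro x hx
    simp only [Finset.mem_insert, Finset.mem_singleton] at hx
    rcases hx with rfl | rfl <;> simp [mem_neighborFinset, h1, h2]
  refine (Finset.eq_of_subset_of_card_le hsub ?_).symm
  rw [Finset.card_pair hab]; exact hdeg

lemma nf_eq_single [Fintype V] [DecidableEq V] [DecidableRel G.Adj] {u a : V}
    (hdeg : G.degree u ≤ 1)
    (h1 : G.Adj u a) : G.neighborFinset u = {a} := by
  have hsub : ({a} : Finset V) ⊆ G.neighborFinset u := by
    simp [mem_neighborFinset, h1]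
  refine (Finset.eq_of_subset_of_card_le hsub ?_).symm
  simpa using hdeg

lemma three_nbrs [Fintype V] [DecidableEq V] [DecidableRel G.Adj] {u a b c : V} (h1 : G.Adj u a)
    (h2 : G.Adj u b) (h3 : G.Adj u c) (hab : a ≠ b) (hac : a ≠ c) (hbc : b ≠ c) :
    3 ≤ G.degree u := by
  have hsub : ({a, b, c} : Finset V) ⊆ G.neighborFinset u := by
    intro x hx
    simp only [Finset.mem_insert, Finset.mem_singleton] at hx
    rcases hx with rfl | rfl | rfl <;> simp [mem_neighborFinset, h1, h2, h3]
  calc 3 = ({a, b, c} : Finset V).card := by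
        rw [Finset.card_insert_of_notMem (by simp [hab, hac]),
          Finset.card_pair hbc]
    _ ≤ _ := Finset.card_le_card hsub

lemma exists_maximal_path [Fintype V] (v0 : V) :
    ∃ (vend : V) (p : G.Walk v0 vend), p.IsPath ∧
      ∀ (x : V) (q : G.Walk v0 x), q.IsPath → q.length ≤ p.length := by
  classical
  set S : Set ℕ := {k | ∃ (x : V) (q : G.Walk v0 x), q.IsPath ∧ q.length = k} with hS
  have hne : S.Nonempty := ⟨0, v0, Walk.nil, by simp⟩
  have hbdd : BddAbove S := by
    refine ⟨Fintype.card V, ?_⟩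
    rintro k ⟨x, q, hq, rfl⟩
    exact hq.length_lt.le
  obtain ⟨x, q, hq, hlen⟩ := Nat.sSup_mem hne hbdd
  exact ⟨x, q, hq, fun y r hr => hlen ▸ le_csSup hbdd ⟨y, r, hr, rfl⟩⟩

lemma fin_sub_val_eq_one {n : ℕ} (hn : 3 ≤ n) (a b : Fin n) :
    (b - a).val = 1 ↔ (b.val = a.val + 1 ∨ (a.val = n - 1 ∧ b.val = 0)) := by
  rw [Fin.sub_def]
  simp only []
  have ha := a.isLt; have hb := b.isLt
  rcases Nat.lt_or_ge (n - a.val + b.val) n with h | h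
  · rw [Nat.mod_eq_of_lt h]; omega
  · rw [Nat.mod_eq_sub_mod h, Nat.mod_eq_of_lt (by omega)]; omega

lemma classify [Fintype V] [DecidableRel G.Adj] (hG : G.Connected)
    (hdeg : ∀ v, G.degree v ≤ 2) :
    (∃ n, Nonempty (G ≃g pathGraph n)) ∨ (∃ n, 3 ≤ n ∧ Nonempty (G ≃g cycleGraph n)) := by
  classical
  by_cases hone : ∃ v0, G.degree v0 ≤ 1
  · -- path case
    left
    obtain ⟨v0, hv0⟩ := hone
    obtain ⟨vend, p, hp, hmax⟩ := exists_maximal_path (G := G) v0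
    have hinj : ∀ {i j : ℕ}, i ≤ p.length → j ≤ p.length →
        p.getVert i = p.getVert j → i = j := fun hi hj h => myGetVert_inj hp hi hj h
    -- no extension at the end
    have hext : ∀ w, G.Adj vend w → w ∈ p.support := by
      intro w hw
      by_contra hns
      have := hmax w (p.concat hw) (myIsPath_concat hp hw hns)
      rw [Walk.length_concat] at this
      omega
    -- spanning
    have hspan : ∀ w, w ∈ p.support := by
      intro w
      by_contra hw
      obtain ⟨a, b, ha, hb, hadj⟩ := crossing (s := {x | x ∈ p.support})
        (p.start_mem_support) hw ((hG.preconnected v0 w).some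
          )
      obtain ⟨i, hia, hi⟩ := Walk.mem_support_iff_exists_getVert.1 ha
      subst hia
      rcases Nat.lt_or_ge i p.length with hiL | hiL
      · rcases Nat.eq_zero_or_pos i with rfl | hi0
        · -- a = v0, degree ≤ 1 but two neighbors
          have h1 : G.Adj (p.getVert 0) (p.getVert 1) := p.adj_getVert_succ (by omega)
          have hb1 : b ≠ p.getVert 1 := by
            intro h; exact hb (h ▸ Walk.mem_support_iff_exists_getVert.2 ⟨1, rfl, by omega⟩)
          rw [Walk.getVert_zero] at h1 hadj
          have h2 : ({p.getVert 1, b} : Finset V) ⊆ G.neighborFinset v0 := by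
            intro x hx
            simp only [Finset.mem_insert, Finset.mem_singleton] at hx
            rcases hx with rfl | rfl <;> simp [mem_neighborFinset, h1, hadj]
          have h3 := Finset.card_le_card h2
          rw [Finset.card_pair (Ne.symm hb1)] at h3
          have hd : (G.neighborFinset v0).card = G.degree v0 := rfl
          omega
        · -- internal vertex, three neighbors
          have h1 : G.Adj (p.getVert i) (p.getVert (i-1)) := by
            have := p.adj_getVert_succ (i := i - 1) (by omega)
            have e : i - 1 + 1 = i := by omega
            rw [e] at this; exact this.symm
          have h2 : G.Adj (p.getVert i) (p.getVert (i+1)) := p.adj_getVert_succ hiL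
          have d12 : p.getVert (i-1) ≠ p.getVert (i+1) := by
            intro h; have := hinj (by omega) (by omega) h; omega
          have d1b : p.getVert (i-1) ≠ b := by
            intro h; exact hb (h ▸ Walk.mem_support_iff_exists_getVert.2 ⟨i-1, rfl, by omega⟩)
          have d2b : p.getVert (i+1) ≠ b := by
            intro h; exact hb (h ▸ Walk.mem_support_iff_exists_getVert.2 ⟨i+1, rfl, by omega⟩)
          have := three_nbrs h1 h2 hadj d12 d1b d2b
          have := hdeg (p.getVert i)
          omega
      · -- a = vend
        have : i = p.length := by omega
        subst this
        rw [p.getVert_length] at hadj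
        exact hb (hext b hadj)
    -- the chord-free property
    have key : ∀ i j, i ≤ p.length → j ≤ p.length → G.Adj (p.getVert i) (p.getVert j) →
        j = i + 1 ∨ i = j + 1 := by
      have internal : ∀ i j, i ≤ p.length → j ≤ p.length → 0 < i → i < p.length →
          G.Adj (p.getVert i) (p.getVert j) → j = i + 1 ∨ i = j + 1 := by
        intro i j hi hj hi0 hiL hadj
        have h1 : G.Adj (p.getVert i) (p.getVert (i-1)) := by
          have := p.adj_getVert_succ (i := i - 1) (by omega)
          have e : i - 1 + 1 = i := by omega
          rw [e] at this; exact this.symm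
        have h2 : G.Adj (p.getVert i) (p.getVert (i+1)) := p.adj_getVert_succ hiL
        have d12 : p.getVert (i-1) ≠ p.getVert (i+1) := by
          intro h; have := hinj (by omega) (by omega) h; omega
        have hnf := nf_eq_pair (hdeg _) h1 h2 d12
        have hmem : p.getVert j ∈ G.neighborFinset (p.getVert i) := by
          rw [mem_neighborFinset]; exact hadj
        rw [hnf] at hmem
        simp only [Finset.mem_insert, Finset.mem_singleton] at hmem
        rcases hmem with h | h
        · right; have := hinj hj (by omega) h; omega
        · left; have := hinj hj (by omega) h; omega
      have zero : ∀ j, j ≤ p.length → G.Adj (p.getVert 0) (p.getVert j) → j = 1 := by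
        intro j hj hadj
        have hL : 1 ≤ p.length := by
          by_contra hL
          have : j = 0 := by omega
          subst this
          exact G.loopless.irrefl _ hadj
        have h1 : G.Adj (p.getVert 0) (p.getVert 1) := p.adj_getVert_succ (by omega)
        have hnf := nf_eq_single (a := p.getVert 1) (u := p.getVert 0)
          (by rw [Walk.getVert_zero]; exact hv0) h1
        have hmem : p.getVert j ∈ G.neighborFinset (p.getVert 0) := by
          rw [mem_neighborFinset]; exact hadj
        rw [hnf] at hmem
        simp only [Finset.mem_singleton] at hmem
        exact hinj hj (by omega) hmem
      intro i j hi hj hadj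
      rcases Nat.eq_zero_or_pos i with rfl | hi0
      · left; rw [zero j hj hadj]
      rcases Nat.eq_zero_or_pos j with rfl | hj0
      · right; rw [zero i hi hadj.symm]
      rcases Nat.lt_or_ge i p.length with hiL | hiL
      · exact internal i j hi hj hi0 hiL hadj
      · have hne : j ≠ i := fun h => G.loopless.irrefl _ (h ▸ hadj)
        have hjL : j < p.length := by omega
        rcases internal j i hj hi hj0 hjL hadj.symm with h | h
        · right; omega
        · left; omega
    -- build the isomorphism
    refine ⟨p.length + 1, ⟨?_⟩⟩
    have hbij : Function.Bijective (fun i : Fin (p.length + 1) => p.getVert i.val) := by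
      constructor
      · intro a b h
        have ha := a.isLt
        have hb := b.isLt
        exact Fin.ext (hinj (by omega) (by omega) h)
      · intro w
        obtain ⟨m, hm, hmle⟩ := Walk.mem_support_iff_exists_getVert.1 (hspan w)
        exact ⟨⟨m, by omega⟩, hm⟩
    have iso : pathGraph (p.length + 1) ≃g G := by
      refine RelIso.mk (Equiv.ofBijective _ hbij) ?_
      intro a b
      show G.Adj (p.getVert a.val) (p.getVert b.val) ↔ _
      have ha := a.isLt
      have hb := b.isLt
      rw [pathGraph_adj]
      constructor
      · intro h
        rcases key a.val b.val (by omega) (by omega) h with h | h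
        · left; omega
        · right; omega
      · intro h
        rcases h with h | h
        · have := p.adj_getVert_succ (i := a.val) (by omega)
          have e : a.val + 1 = b.val := h
          rw [e] at this; exact this
        · have := p.adj_getVert_succ (i := b.val) (by omega)
          have e : b.val + 1 = a.val := h
          rw [e] at this; exact this.symm
    exact iso.symm
  · -- cycle case
    right
    push_neg at hone
    have hdeg2 : ∀ v, G.degree v = 2 := fun v => by have h1 := hone v; have h2 := hdeg v; omega
    have : Nonempty V := hG.nonempty
    obtain ⟨v0⟩ := this
    obtain ⟨vend, p, hp, hmax⟩ := exists_maximal_path (G := G) v0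
    have hinj : ∀ {i j : ℕ}, i ≤ p.length → j ≤ p.length →
        p.getVert i = p.getVert j → i = j := fun hi hj h => myGetVert_inj hp hi hj h
    have hext : ∀ w, G.Adj vend w → w ∈ p.support := by
      intro w hw
      by_contra hns
      have := hmax w (p.concat hw) (myIsPath_concat hp hw hns)
      rw [Walk.length_concat] at this
      omega
    -- length at least 1
    have hL1 : 1 ≤ p.length := by
      have h2 : 0 < (G.neighborFinset v0).card := by
        have := hdeg2 v0
        have hd : (G.neighborFinset v0).card = G.degree v0 := rfl
        omega
      obtain ⟨x, hx⟩ := Finset.card_pos.1 h2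
      rw [mem_neighborFinset] at hx
      by_contra hL
      have hq : (Walk.cons hx Walk.nil : G.Walk v0 x).IsPath := by
        rw [Walk.cons_isPath_iff]
        exact ⟨Walk.IsPath.nil, by simp [hx.ne]⟩
      have := hmax x _ hq
      simp [Walk.length_cons] at this
      omega
    -- second neighbor of vend
    have hprev : G.Adj (p.getVert (p.length - 1)) vend := by
      have := p.adj_getVert_succ (i := p.length - 1) (by omega)
      have e : p.length - 1 + 1 = p.length := by omega
      rw [e, p.getVert_length] at this; exact this
    have hcard : 1 < (G.neighborFinset vend).card := by
      have := hdeg2 vend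
      have hd : (G.neighborFinset vend).card = G.degree vend := rfl
      omega
    obtain ⟨x, hxmem, hxne⟩ := Finset.exists_mem_ne hcard (p.getVert (p.length - 1))
    rw [mem_neighborFinset] at hxmem
    obtain ⟨j, hja, hj⟩ := Walk.mem_support_iff_exists_getVert.1 (hext x hxmem)
    subst hja
    have hjL : j ≠ p.length := by
      intro h
      rw [h, p.getVert_length] at hxmem
      exact G.loopless.irrefl _ hxmem
    have hjL1 : j ≠ p.length - 1 := fun h => hxne (by rw [h])
    have hj0 : j = 0 := by
      by_contra hj0
      have h1 : G.Adj (p.getVert j) (p.getVert (j-1)) := by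
        have := p.adj_getVert_succ (i := j - 1) (by omega)
        have e : j - 1 + 1 = j := by omega
        rw [e] at this; exact this.symm
      have h2 : G.Adj (p.getVert j) (p.getVert (j+1)) := p.adj_getVert_succ (by omega)
      have d12 : p.getVert (j-1) ≠ p.getVert (j+1) := by
        intro h; have := hinj (by omega) (by omega) h; omega
      have d1v : p.getVert (j-1) ≠ vend := by
        intro h
        have := hinj (i := j-1) (j := p.length) (by omega) le_rfl
          (h.trans p.getVert_length.symm)
        omega
      have d2v : p.getVert (j+1) ≠ vend := by
        intro h
        have := hinj (i := j+1) (j := p.length) (by omega) le_rfl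
          (h.trans p.getVert_length.symm)
        omega
      have := three_nbrs h1 h2 hxmem.symm d12 d1v d2v
      have := hdeg2 (p.getVert j)
      omega
    subst hj0
    rw [p.getVert_zero] at hxmem hxne
    have hL2 : 2 ≤ p.length := by
      rcases Nat.lt_or_ge p.length 2 with h | h
      · exfalso
        have : p.length = 1 := by omega
        exact hjL1 (by omega)
      · exact h
    -- neighbor finsets of the two endpoints
    have hnfend : G.neighborFinset vend = {p.getVert (p.length - 1), v0} := by
      refine nf_eq_pair (hdeg2 _).le hprev.symm hxmem ?_
      intro h
      have := hinj (i := p.length - 1) (j := 0) (by omega) (by omega)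
        (h.trans p.getVert_zero.symm)
      omega
    have hnf0 : G.neighborFinset v0 = {p.getVert 1, vend} := by
      have h1 : G.Adj v0 (p.getVert 1) := by
        have := p.adj_getVert_succ (i := 0) (by omega)
        rw [p.getVert_zero] at this; exact this
      refine nf_eq_pair (hdeg2 _).le h1 hxmem.symm ?_
      intro h
      have := hinj (i := 1) (j := p.length) (by omega) le_rfl
        (h.trans p.getVert_length.symm)
      omega
    -- spanning
    have hspan : ∀ w, w ∈ p.support := by
      intro w
      by_contra hw
      obtain ⟨a, b, ha, hb, hadj⟩ := crossing (s := {x | x ∈ p.support})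
        (p.start_mem_support) hw ((hG.preconnected v0 w).some)
      obtain ⟨i, hia, hi⟩ := Walk.mem_support_iff_exists_getVert.1 ha
      subst hia
      have hbmem : ∀ k, k ≤ p.length → b ≠ p.getVert k := by
        intro k hk h
        exact hb (h ▸ Walk.mem_support_iff_exists_getVert.2 ⟨k, rfl, hk⟩)
      rcases Nat.eq_zero_or_pos i with rfl | hi0
      · rw [p.getVert_zero] at hadj
        have : b ∈ G.neighborFinset v0 := by rw [mem_neighborFinset]; exact hadj
        rw [hnf0] at this
        simp only [Finset.mem_insert, Finset.mem_singleton] at this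
        rcases this with h | h
        · exact hbmem 1 (by omega) h
        · exact hbmem p.length le_rfl (by rw [p.getVert_length]; exact h)
      rcases Nat.lt_or_ge i p.length with hiL | hiL
      · have h1 : G.Adj (p.getVert i) (p.getVert (i-1)) := by
          have := p.adj_getVert_succ (i := i - 1) (by omega)
          have e : i - 1 + 1 = i := by omega
          rw [e] at this; exact this.symm
        have h2 : G.Adj (p.getVert i) (p.getVert (i+1)) := p.adj_getVert_succ hiL
        have d12 : p.getVert (i-1) ≠ p.getVert (i+1) := by
          intro h; have := hinj (by omega) (by omega) h; omega
        have := three_nbrs h1 h2 hadj d12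
          (Ne.symm ((hbmem (i-1) (by omega)))).symm.symm
          (Ne.symm ((hbmem (i+1) (by omega)))).symm.symm
        have := hdeg2 (p.getVert i)
        omega
      · have he : i = p.length := by omega
        rw [he, p.getVert_length] at hadj
        have : b ∈ G.neighborFinset vend := by rw [mem_neighborFinset]; exact hadj
        rw [hnfend] at this
        simp only [Finset.mem_insert, Finset.mem_singleton] at this
        rcases this with h | h
        · exact hbmem (p.length - 1) (by omega) h
        · exact hbmem 0 (by omega) (by rw [p.getVert_zero]; exact h)
    -- adjacency characterization
    have key : ∀ i j, i ≤ p.length → j ≤ p.length → G.Adj (p.getVert i) (p.getVert j) →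
        j = i + 1 ∨ i = j + 1 ∨ (i = 0 ∧ j = p.length) ∨ (i = p.length ∧ j = 0) := by
      have internal : ∀ i j, i ≤ p.length → j ≤ p.length → 0 < i → i < p.length →
          G.Adj (p.getVert i) (p.getVert j) → j = i + 1 ∨ i = j + 1 := by
        intro i j hi hj hi0 hiL hadj
        have h1 : G.Adj (p.getVert i) (p.getVert (i-1)) := by
          have := p.adj_getVert_succ (i := i - 1) (by omega)
          have e : i - 1 + 1 = i := by omega
          rw [e] at this; exact this.symm
        have h2 : G.Adj (p.getVert i) (p.getVert (i+1)) := p.adj_getVert_succ hiL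
        have d12 : p.getVert (i-1) ≠ p.getVert (i+1) := by
          intro h; have := hinj (by omega) (by omega) h; omega
        have hnf := nf_eq_pair (hdeg2 _).le h1 h2 d12
        have hmem : p.getVert j ∈ G.neighborFinset (p.getVert i) := by
          rw [mem_neighborFinset]; exact hadj
        rw [hnf] at hmem
        simp only [Finset.mem_insert, Finset.mem_singleton] at hmem
        rcases hmem with h | h
        · right; have := hinj hj (by omega) h; omega
        · left; have := hinj hj (by omega) h; omega
      intro i j hi hj hadj
      rcases Nat.eq_zero_or_pos i with rfl | hi0
      · rw [p.getVert_zero] at hadj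
        have : p.getVert j ∈ G.neighborFinset v0 := by rw [mem_neighborFinset]; exact hadj
        rw [hnf0] at this
        simp only [Finset.mem_insert, Finset.mem_singleton] at this
        rcases this with h | h
        · left; have := hinj hj (by omega) h; omega
        · right; right; left
          have := hinj hj le_rfl (h.trans p.getVert_length.symm); omega
      rcases Nat.lt_or_ge i p.length with hiL | hiL
      · rcases internal i j hi hj hi0 hiL hadj with h | h
        · left; exact h
        · right; left; exact h
      · have he : i = p.length := by omega
        rw [he, p.getVert_length] at hadj
        have : p.getVert j ∈ G.neighborFinset vend := by
          rw [mem_neighborFinset]; exact hadj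
        rw [hnfend] at this
        simp only [Finset.mem_insert, Finset.mem_singleton] at this
        rcases this with h | h
        · right; left; have := hinj hj (by omega) h; omega
        · right; right; right
          have := hinj hj (by omega) (h.trans p.getVert_zero.symm)
          omega
    -- build the isomorphism
    refine ⟨p.length + 1, by omega, ⟨?_⟩⟩
    have hbij : Function.Bijective (fun i : Fin (p.length + 1) => p.getVert i.val) := by
      constructor
      · intro a b h
        have ha := a.isLt
        have hb := b.isLt
        exact Fin.ext (hinj (by omega) (by omega) h)
      · intro w
        obtain ⟨m, hm, hmle⟩ := Walk.mem_support_iff_exists_getVert.1 (hspan w)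
        exact ⟨⟨m, by omega⟩, hm⟩
    have iso : cycleGraph (p.length + 1) ≃g G := by
      refine RelIso.mk (Equiv.ofBijective _ hbij) ?_
      intro a b
      show G.Adj (p.getVert a.val) (p.getVert b.val) ↔ _
      have ha := a.isLt
      have hb := b.isLt
      rw [cycleGraph_adj']
      rw [fin_sub_val_eq_one (by omega), fin_sub_val_eq_one (by omega)]
      constructor
      · intro h
        rcases key a.val b.val (by omega) (by omega) h with h | h | h | h
        · right; left; omega
        · left; left; omega
        · left; right; omega
        · right; right; omega
      · intro h
        have hstep : ∀ k, k < p.length → G.Adj (p.getVert k) (p.getVert (k+1)) :=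
          fun k hk => p.adj_getVert_succ hk
        have hwrap : G.Adj (p.getVert p.length) (p.getVert 0) := by
          rw [p.getVert_length, p.getVert_zero]; exact hxmem
        rcases h with (h | h) | (h | h)
        · have := hstep b.val (by omega)
          have e : b.val + 1 = a.val := by omega
          rw [e] at this; exact this.symm
        · have e1 : b.val = p.length := by omega
          have e2 : a.val = 0 := by omega
          rw [e1, e2]; exact hwrap.symm
        · have := hstep a.val (by omega)
          have e : a.val + 1 = b.val := by omega
          rw [e] at this; exact this
        · have e1 : a.val = p.length := by omega
          have e2 : b.val = 0 := by omega
          rw [e1, e2]; exact hwrap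
    exact iso.symm


lemma fin_add_one_val {m : ℕ} (v : Fin (m + 3)) :
    (v + 1).val = if v.val = m + 2 then 0 else v.val + 1 := by
  have hv := v.isLt
  have h : (v + 1).val = (v.val + 1) % (m + 3) := by
    rw [Fin.add_def]
    simp [Fin.val_one]
  rw [h]
  rcases Nat.lt_or_ge (v.val + 1) (m + 3) with h' | h'
  · rw [Nat.mod_eq_of_lt h']; split_ifs <;> omega
  · rw [Nat.mod_eq_sub_mod h', Nat.mod_eq_of_lt (by omega)]; split_ifs <;> omega

lemma fin_sub_one_val {m : ℕ} (v : Fin (m + 3)) :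
    (v - 1).val = if v.val = 0 then m + 2 else v.val - 1 := by
  have hv := v.isLt
  have h : (v - 1).val = (m + 2 + v.val) % (m + 3) := by
    rw [Fin.sub_def]
    simp [Fin.val_one]
  rw [h]
  rcases Nat.lt_or_ge (m + 2 + v.val) (m + 3) with h' | h'
  · rw [Nat.mod_eq_of_lt h']; split_ifs <;> omega
  · rw [Nat.mod_eq_sub_mod h', Nat.mod_eq_of_lt (by omega)]; split_ifs <;> omega

lemma cert_ncard {V : Type} [Fintype V] [DecidableEq V] (G : SimpleGraph V) [DecidableRel G.Adj]
    (ℓ : V → Fin 2) (v : V) :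
    {u | u ∈ insert v (G.neighborSet v) ∧ ℓ u = 1}.ncard
      = ((insert v (G.neighborFinset v)).filter (fun u => ℓ u = 1)).card := by
  rw [← Set.ncard_coe_finset]
  congr 1
  ext u
  simp [mem_neighborFinset, mem_neighborSet, and_comm]

lemma cert_transfer {V W : Type} [Fintype V] [Fintype W] {G : SimpleGraph V} {H : SimpleGraph W}
    [DecidableRel G.Adj] [DecidableRel H.Adj] (e : G ≃g H)
    (h : ∃ ℓ : W → Fin 2, ∀ v, H.degree v ≤ 2 ∧
      (H.degree v = 2 → {u | u ∈ insert v (H.neighborSet v) ∧ ℓ u = 1}.ncard = 1)) :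
    ∃ ℓ : V → Fin 2, ∀ v, G.degree v ≤ 2 ∧
      (G.degree v = 2 → {u | u ∈ insert v (G.neighborSet v) ∧ ℓ u = 1}.ncard = 1) := by
  obtain ⟨ℓ, hℓ⟩ := h
  refine ⟨fun v => ℓ (e v), fun v => ?_⟩
  have hdegeq : G.degree v = H.degree (e v) := by
    rw [← card_neighborSet_eq_degree, ← card_neighborSet_eq_degree]
    exact Fintype.card_congr (e.mapNeighborSet v)
  refine ⟨hdegeq ▸ (hℓ (e v)).1, fun h2 => ?_⟩
  have hc := (hℓ (e v)).2 (by rw [← hdegeq]; exact h2)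
  have hset : {u | u ∈ insert v (G.neighborSet v) ∧ ℓ (e u) = 1}
      = (fun w => e.symm w) '' {u | u ∈ insert (e v) (H.neighborSet (e v)) ∧ ℓ u = 1} := by
    ext u
    simp only [Set.mem_image, Set.mem_setOf_eq, Set.mem_insert_iff, mem_neighborSet]
    constructor
    · rintro ⟨h1, hl⟩
      refine ⟨e u, ⟨?_, hl⟩, by simp⟩
      rcases h1 with rfl | h1
      · left; rfl
      · right; exact e.map_adj_iff.2 h1
    · rintro ⟨w, ⟨h1, hl⟩, rfl⟩
      refine ⟨?_, by simpa using hl⟩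
      rcases h1 with rfl | h1
      · left; simp
      · right
        have := e.symm.map_adj_iff.2 h1
        simpa using this
  rw [hset, Set.ncard_image_of_injective _ (fun a b hab => e.toEquiv.symm.injective hab : Function.Injective fun w => e.symm w)]
  exact hc

lemma fin2_ite_eq_one (P : Prop) [Decidable P] :
    ((if P then (1 : Fin 2) else 0) = 1) ↔ P := by
  split_ifs with h <;> simp [h]

lemma cyc_window {m : ℕ} (v : Fin (m + 3)) (p : Fin (m + 3) → Prop) [DecidablePred p] :
    ((insert v ((cycleGraph (m + 3)).neighborFinset v)).filter (fun u => p u)).card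
      = (if p v then 1 else 0) + ((if p (v - 1) then 1 else 0) + (if p (v + 1) then 1 else 0)) := by
  have hv := v.isLt
  have e1 := fin_sub_one_val v
  have e2 := fin_add_one_val v
  have d1 : v - 1 ≠ v := fun h => by have := congrArg Fin.val h; rw [e1] at this; split_ifs at this <;> omega
  have d2 : v ≠ v + 1 := fun h => by have := congrArg Fin.val h; rw [e2] at this; split_ifs at this <;> omega
  have d3 : v - 1 ≠ v + 1 := fun h => by
    have := congrArg Fin.val h; rw [e1, e2] at this; split_ifs at this <;> omega
  have hnf : (cycleGraph (m + 3)).neighborFinset v = {v - 1, v + 1} :=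
    cycleGraph_neighborFinset (n := m + 1)
  have hmem1 : v ∉ ({v - 1, v + 1} : Finset (Fin (m + 3))) := by
    simp only [Finset.mem_insert, Finset.mem_singleton]
    push_neg
    exact ⟨d1.symm, d2⟩
  have hmem2 : (v - 1) ∉ ({v + 1} : Finset (Fin (m + 3))) := by simpa using d3
  rw [hnf, Finset.card_filter, Finset.sum_insert hmem1, Finset.sum_insert hmem2,
    Finset.sum_singleton]

lemma cycle_mod3 {n : ℕ} (hn : 3 ≤ n)
    (h : ∃ ℓ : Fin n → Fin 2, ∀ v, (cycleGraph n).degree v ≤ 2 ∧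
      ((cycleGraph n).degree v = 2 →
        {u | u ∈ insert v ((cycleGraph n).neighborSet v) ∧ ℓ u = 1}.ncard = 1)) :
    n % 3 = 0 := by
  obtain ⟨m, rfl⟩ : ∃ m, n = m + 3 := ⟨n - 3, by omega⟩
  obtain ⟨ℓ, hℓ⟩ := h
  have hwin : ∀ v : Fin (m + 3),
      (if ℓ v = 1 then 1 else 0) +
        ((if ℓ (v - 1) = 1 then 1 else 0) + (if ℓ (v + 1) = 1 then 1 else 0)) = 1 := by
    intro v
    have h1 := (hℓ v).2 cycleGraph_degree_three_le
    rw [cert_ncard, cyc_window] at h1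
    exact h1
  have hsum : ∑ v : Fin (m + 3), ((if ℓ v = 1 then 1 else 0) +
      ((if ℓ (v - 1) = 1 then 1 else 0) + (if ℓ (v + 1) = 1 then 1 else 0))) = m + 3 := by
    rw [Finset.sum_congr rfl (fun v _ => hwin v)]
    simp
  rw [Finset.sum_add_distrib, Finset.sum_add_distrib] at hsum
  have e1 : ∑ v : Fin (m + 3), (if ℓ (v - 1) = 1 then 1 else 0)
      = ∑ v : Fin (m + 3), (if ℓ v = 1 then 1 else 0) :=
    Fintype.sum_equiv (Equiv.subRight 1) _ _ (fun v => rfl)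
  have e2 : ∑ v : Fin (m + 3), (if ℓ (v + 1) = 1 then 1 else 0)
      = ∑ v : Fin (m + 3), (if ℓ v = 1 then 1 else 0) :=
    Fintype.sum_equiv (Equiv.addRight 1) _ _ (fun v => rfl)
  rw [e1, e2] at hsum
  omega

lemma cycle_cert {n : ℕ} (hn : 3 ≤ n) (hmod : n % 3 = 0) :
    ∃ ℓ : Fin n → Fin 2, ∀ v, (cycleGraph n).degree v ≤ 2 ∧
      ((cycleGraph n).degree v = 2 →
        {u | u ∈ insert v ((cycleGraph n).neighborSet v) ∧ ℓ u = 1}.ncard = 1) := by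
  obtain ⟨m, rfl⟩ : ∃ m, n = m + 3 := ⟨n - 3, by omega⟩
  refine ⟨fun v => if v.val % 3 = 0 then 1 else 0, fun v => ?_⟩
  refine ⟨cycleGraph_degree_three_le.le, fun _ => ?_⟩
  rw [cert_ncard, cyc_window]
  simp only [fin2_ite_eq_one]
  have e1 := fin_sub_one_val v
  have e2 := fin_add_one_val v
  have hv := v.isLt
  simp only [e1, e2]
  split_ifs <;> omega

lemma nf_eq_pair' {V : Type} {G : SimpleGraph V} [Fintype V] [DecidableEq V] [DecidableRel G.Adj] {u a b : V}
    (hdeg : G.degree u ≤ 2)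
    (h1 : G.Adj u a) (h2 : G.Adj u b) (hab : a ≠ b) : G.neighborFinset u = {a, b} := by
  have hsub : ({a, b} : Finset V) ⊆ G.neighborFinset u := by
    intro x hx
    simp only [Finset.mem_insert, Finset.mem_singleton] at hx
    rcases hx with rfl | rfl <;> simp [SimpleGraph.mem_neighborFinset, h1, h2]
  refine (Finset.eq_of_subset_of_card_le hsub ?_).symm
  rw [Finset.card_pair hab]; exact hdeg

lemma path_cert (n : ℕ) [DecidableRel (pathGraph n).Adj] :
    ∃ ℓ : Fin n → Fin 2, ∀ v, (pathGraph n).degree v ≤ 2 ∧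
      ((pathGraph n).degree v = 2 →
        {u | u ∈ insert v ((pathGraph n).neighborSet v) ∧ ℓ u = 1}.ncard = 1) := by
  classical
  refine ⟨fun v => if v.val % 3 = 0 then 1 else 0, fun v => ?_⟩
  have hlt := v.isLt
  constructor
  · have hsub : ∀ u ∈ (pathGraph n).neighborFinset v,
        u.val ∈ ({v.val + 1, v.val - 1} : Finset ℕ) := by
      intro u hu
      rw [mem_neighborFinset, pathGraph_adj] at hu
      simp only [Finset.mem_insert, Finset.mem_singleton]
      omega
    have h1 := Finset.card_le_card_of_injOn Fin.val hsub
      (fun a _ b _ h => Fin.ext h)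
    have h2 : ({v.val + 1, v.val - 1} : Finset ℕ).card ≤ 2 :=
      (Finset.card_insert_le _ _).trans (by simp)
    calc (pathGraph n).degree v = ((pathGraph n).neighborFinset v).card := rfl
      _ ≤ _ := h1
      _ ≤ 2 := h2
  · intro h2
    obtain ⟨a, ha, b, hb, hab⟩ := Finset.one_lt_card.1
      (by rw [← card_neighborFinset_eq_degree] at h2; omega :
        1 < ((pathGraph n).neighborFinset v).card)
    rw [mem_neighborFinset, pathGraph_adj] at ha hb
    have hav := a.isLt
    have hbv := b.isLt
    have h0 : 0 < v.val ∧ v.val + 1 < n := by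
      constructor
      · by_contra h0
        exact hab (Fin.ext (by omega))
      · by_contra h0
        exact hab (Fin.ext (by omega))
    have hA : (pathGraph n).Adj v ⟨v.val - 1, by omega⟩ := by
      rw [pathGraph_adj]; right; simp only [Fin.val_mk]; omega
    have hC : (pathGraph n).Adj v ⟨v.val + 1, by omega⟩ := by
      rw [pathGraph_adj]; left; simp
    have hAC : (⟨v.val - 1, by omega⟩ : Fin n) ≠ ⟨v.val + 1, by omega⟩ := by
      intro h
      have := congrArg Fin.val h
      simp only [Fin.val_mk] at this
      omega
    have hnf := nf_eq_pair' h2.le hA hC hAC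
    rw [cert_ncard, hnf, Finset.card_filter]
    have hm1 : v ∉ ({(⟨v.val - 1, by omega⟩ : Fin n), ⟨v.val + 1, by omega⟩} : Finset (Fin n)) := by
      simp [Fin.ext_iff]
      omega
    have hm2 : (⟨v.val - 1, by omega⟩ : Fin n) ∉ ({⟨v.val + 1, by omega⟩} : Finset (Fin n)) := by
      simp only [Finset.mem_singleton]
      exact hAC
    rw [Finset.sum_insert hm1, Finset.sum_insert hm2, Finset.sum_singleton]
    simp only [fin2_ite_eq_one, Fin.val_mk]
    split_ifs <;> omega


/-- A connected graph admits a binary labeling in which every vertex has degree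
at most 2 and every degree-2 vertex has exactly one vertex of its closed
neighborhood labeled 1, if and only if the graph is a path or a cycle of
length divisible by 3. -/
theorem binary_certification_of_paths_and_cycles
    {V : Type} [Fintype V] (G : SimpleGraph V) [DecidableRel G.Adj]
    (hG : G.Connected) :
    (∃ ℓ : V → Fin 2, ∀ v : V, G.degree v ≤ 2 ∧
        (G.degree v = 2 → {u | u ∈ insert v (G.neighborSet v) ∧ ℓ u = 1}.ncard = 1)) ↔
      ((∃ n : ℕ, Nonempty (G ≃g SimpleGraph.pathGraph n)) ∨
       (∃ n : ℕ, 3 ≤ n ∧ n % 3 = 0 ∧ Nonempty (G ≃g SimpleGraph.cycleGraph n))) := by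
  classical
  constructor
  · intro h
    obtain ⟨ℓ, hℓ⟩ := h
    rcases classify hG (fun v => (hℓ v).1) with ⟨n, ⟨e⟩⟩ | ⟨n, hn3, ⟨e⟩⟩
    · exact Or.inl ⟨n, ⟨e⟩⟩
    · exact Or.inr ⟨n, hn3, cycle_mod3 hn3 (cert_transfer e.symm ⟨ℓ, hℓ⟩), ⟨e⟩⟩
  · intro h
    rcases h with ⟨n, ⟨e⟩⟩ | ⟨n, hn3, hmod, ⟨e⟩⟩
    · exact cert_transfer e (path_cert n)
    · exact cert_transfer e (cycle_cert hn3 hmod)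
end
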